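/- arXiv:2605.11911 — 10 statements merged into one kernel-verified Lean document; each statement's English description precedes it below -/
import Mathlib

section
/- If each weight matrix W_l(t) evolves under the backpropagation gradient flow dW_l/dt = W_{L:l+1}ᵀ r x̂_{l−1}ᵀ (all quantities evaluated from the weights at time t), then the prediction ŷ(t) = W_{L:1}(t) x is differentiable in t and satisfies dŷ/dt = ∑_{l=1}^{L} W_{L:l+1} W_{L:l+1}ᵀ r (x̂_{l−1}ᵀ x̂_{l−1}). -/
/-!
By the product rule, the derivative of `W_{L:1}` is `∑_l W_{L:l+1} (dW_l/dt) W_{l-1:1}`.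
Under the gradient flow, the `l`-th term applied to `x` is
`W_{L:l+1} W_{L:l+1}ᵀ r x̂_{l-1}ᵀ x̂_{l-1}`, since `x̂_{l-1} = W_{l-1:1} x`.
-/

open Matrix

namespace Matrix

variable {𝕜 : Type*} [NontriviallyNormedField 𝕜] {m p q : Type*}

def HasEntrywiseDerivAt (A : 𝕜 → Matrix m p 𝕜) (A' : Matrix m p 𝕜) (t : 𝕜) : Prop :=
  ∀ i j, HasDerivAt (fun s => A s i j) (A' i j) t

theorem hasEntrywiseDerivAt_const (A : Matrix m p 𝕜) (t : 𝕜) :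
    HasEntrywiseDerivAt (fun _ => A) 0 t :=
  fun i j => hasDerivAt_const t (A i j)

theorem HasEntrywiseDerivAt.mul [Fintype p] {A : 𝕜 → Matrix m p 𝕜} {B : 𝕜 → Matrix p q 𝕜}
    {A' : Matrix m p 𝕜} {B' : Matrix p q 𝕜} {t : 𝕜}
    (hA : HasEntrywiseDerivAt A A' t) (hB : HasEntrywiseDerivAt B B' t) :
    HasEntrywiseDerivAt (fun s => A s * B s) (A' * B t + A t * B') t := fun i j => by
  simpa only [mul_apply, add_apply, ← Finset.sum_add_distrib] using
    HasDerivAt.fun_sum fun k _ => (hA i k).fun_mul (hB k j)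

theorem HasEntrywiseDerivAt.mulVec_const [Fintype m] [Fintype p] {A : 𝕜 → Matrix m p 𝕜}
    {A' : Matrix m p 𝕜} {t : 𝕜} (hA : HasEntrywiseDerivAt A A' t) (x : p → 𝕜) :
    HasDerivAt (fun s => A s *ᵥ x) (A' *ᵥ x) t :=
  hasDerivAt_pi.2 fun i => by
    simpa only [mulVec, dotProduct] using HasDerivAt.fun_sum fun j _ => (hA i j).mul_const (x j)

end Matrix

section BackwardProducts

variable {𝕜 : Type*} [NontriviallyNormedField 𝕜] {ι : ℕ → Type*} [∀ k, Fintype (ι k)]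
  {o κ : Type*} {L : ℕ} {W : ∀ k, 𝕜 → Matrix (ι k) (ι (k - 1)) 𝕜} {P : ∀ k, 𝕜 → Matrix o (ι k) 𝕜}
  {Q : ∀ k, Matrix (ι k) κ 𝕜} {D : ∀ k, Matrix (ι k) (ι (k - 1)) 𝕜} {t₀ : 𝕜}

/-- The derivative of `P k = W_{L:k+1}` is `∑_l P l * D l * W_{l-1:k+1}`; the intermediate
products `W_{l-1:k+1}` are not at hand, but multiplied by `Q k = W_{k:1}` they become `Q (l-1)`. -/
theorem exists_hasEntrywiseDerivAt_mul_eq_sum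
    (hPL : HasEntrywiseDerivAt (P L) 0 t₀)
    (hP : ∀ t k, k < L → P k t = P (k + 1) t * W (k + 1) t)
    (hQ : ∀ k, 1 ≤ k → k ≤ L → Q k = W k t₀ * Q (k - 1))
    (hW : ∀ l, 1 ≤ l → l ≤ L → HasEntrywiseDerivAt (W l) (D l) t₀)
    {k : ℕ} (hk : k ≤ L) :
    ∃ G, HasEntrywiseDerivAt (P k) G t₀ ∧
      G * Q k = ∑ l ∈ Finset.Icc (k + 1) L, P l t₀ * D l * Q (l - 1) := by
  induction hk using Nat.decreasingInduction with
  | self => exact ⟨0, hPL, by simp⟩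
  | of_succ k hkL ih =>
    obtain ⟨G, hG, hGQ⟩ := ih
    refine ⟨G * W (k + 1) t₀ + P (k + 1) t₀ * D (k + 1), ?_, ?_⟩
    · exact funext (hP · k hkL) ▸ hG.mul (hW (k + 1) k.succ_pos hkL)
    · rw [← Finset.insert_Icc_add_one_left_eq_Icc hkL, Finset.sum_insert (by simp),
        ← hGQ, hQ (k + 1) k.succ_pos hkL]
      simp only [Matrix.add_mul, Matrix.mul_assoc]
      exact add_comm _ _

end BackwardProducts

theorem stmt2_general
    (L : ℕ) (n : ℕ → ℕ)
    (W : ∀ k : ℕ, ℝ → Matrix (Fin (n k)) (Fin (n (k - 1))) ℝ)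
    (P : ∀ k : ℕ, ℝ → Matrix (Fin (n L)) (Fin (n k)) ℝ)
    (hPL : ∀ t : ℝ, P L t = 1)
    (hP : ∀ t : ℝ, ∀ k : ℕ, k < L → P k t = P (k + 1) t * W (k + 1) t)
    (Q : ∀ k : ℕ, ℝ → Matrix (Fin (n k)) (Fin (n 0)) ℝ)
    (hQ0 : ∀ t : ℝ, Q 0 t = 1)
    (hQ : ∀ t : ℝ, ∀ k : ℕ, 1 ≤ k → k ≤ L → Q k t = W k t * Q (k - 1) t)
    (x : Fin (n 0) → ℝ) (y : Fin (n L) → ℝ) (t₀ : ℝ)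
    (hW : ∀ l : ℕ, 1 ≤ l → l ≤ L → ∀ i j, HasDerivAt (fun t => W l t i j)
      (((P l t₀)ᵀ * vecMulVec (y - P 0 t₀ *ᵥ x) (Q (l - 1) t₀ *ᵥ x)) i j) t₀) :
    HasDerivAt (fun t => P 0 t *ᵥ x)
      (∑ l ∈ Finset.Icc 1 L, ((Q (l - 1) t₀ *ᵥ x) ⬝ᵥ (Q (l - 1) t₀ *ᵥ x)) •
        ((P l t₀ * (P l t₀)ᵀ) *ᵥ (y - P 0 t₀ *ᵥ x))) t₀ := by
  have hPL' : HasEntrywiseDerivAt (P L) 0 t₀ :=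
    (funext hPL).symm ▸ hasEntrywiseDerivAt_const 1 t₀
  obtain ⟨G, hG, hGQ⟩ := exists_hasEntrywiseDerivAt_mul_eq_sum hPL' hP (hQ t₀) hW L.zero_le
  rw [hQ0, Matrix.mul_one] at hGQ
  convert hG.mulVec_const x using 1
  rw [hGQ, sum_mulVec]
  refine Finset.sum_congr rfl fun l _ => ?_
  simp only [← mulVec_mulVec, vecMulVec_mulVec, op_smul_eq_smul, mulVec_smul]

/-- If each weight matrix `W_l(t)` evolves under the backpropagation
gradient flow `dW_l/dt = W_{L:l+1}ᵀ r x̂_{l−1}ᵀ`, then the prediction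
`ŷ(t) = W_{L:1}(t) x` is differentiable in `t` and
`dŷ/dt = ∑_{l=1}^{L} W_{L:l+1} W_{L:l+1}ᵀ r (x̂_{l−1}ᵀ x̂_{l−1})`.
Here `P l t = W_{L:l+1}(t)` and `Q l t = W_{l:1}(t)` are the partial products. -/
theorem stmt2
    (L : ℕ) (hL : 1 ≤ L) (n : ℕ → ℕ)
    (W : ∀ k : ℕ, ℝ → Matrix (Fin (n k)) (Fin (n (k - 1))) ℝ)
    (P : ∀ k : ℕ, ℝ → Matrix (Fin (n L)) (Fin (n k)) ℝ)
    (hPL : ∀ t : ℝ, P L t = 1)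
    (hP : ∀ t : ℝ, ∀ k : ℕ, k < L → P k t = P (k + 1) t * W (k + 1) t)
    (Q : ∀ k : ℕ, ℝ → Matrix (Fin (n k)) (Fin (n 0)) ℝ)
    (hQ0 : ∀ t : ℝ, Q 0 t = 1)
    (hQ : ∀ t : ℝ, ∀ k : ℕ, 1 ≤ k → k ≤ L → Q k t = W k t * Q (k - 1) t)
    (x : Fin (n 0) → ℝ) (y : Fin (n L) → ℝ) (t₀ : ℝ)
    (hW : ∀ l : ℕ, 1 ≤ l → l ≤ L → ∀ i j, HasDerivAt (fun t => W l t i j)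
      (((P l t₀)ᵀ * vecMulVec (y - P 0 t₀ *ᵥ x) (Q (l - 1) t₀ *ᵥ x)) i j) t₀) :
    HasDerivAt (fun t => P 0 t *ᵥ x)
      (∑ l ∈ Finset.Icc 1 L, ((Q (l - 1) t₀ *ᵥ x) ⬝ᵥ (Q (l - 1) t₀ *ᵥ x)) •
        ((P l t₀ * (P l t₀)ᵀ) *ᵥ (y - P 0 t₀ *ᵥ x))) t₀ :=
  stmt2_general L n W P hPL hP Q hQ0 hQ x y t₀ hW
end

section
/- For each hidden layer 1 ≤ l ≤ L−1, the gradient of the PC energy E with respect to the activity x_l equals ε_l − W_{l+1}ᵀ ε_{l+1}. Consequently, if the activities are at inference equilibrium, then the prediction errors satisfy ε_l = W_{L:l+1}ᵀ ε_L for every l = 1, …, L. -/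
/-!
Only the terms `k = l` and `k = l + 1` of the energy depend on `x_l`: they are
`½‖x_l - W_l x_{l-1}‖²` and `½‖x_{l+1} - W_{l+1} x_l‖²`, with gradients `ε_l` and
`-W_{l+1}ᵀ ε_{l+1}`. At equilibrium this gives the backward recursion
`ε_l = W_{l+1}ᵀ ε_{l+1}`, which unrolls from `ε_L` to `ε_l = W_{L:l+1}ᵀ ε_L`.
-/

open Matrix

section DotProduct

variable {m q : Type*} [Fintype m] [Fintype q]

noncomputable def dotProductCLM : (m → ℝ) →ₗ[ℝ] (m → ℝ) →L[ℝ] ℝ :=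
  LinearMap.toContinuousLinearMap.toLinearMap ∘ₗ dotProductBilin ℝ ℝ

@[simp]
lemma dotProductCLM_apply (c h : m → ℝ) : dotProductCLM c h = c ⬝ᵥ h := rfl

lemma hasFDerivAt_half_dotProduct_self_mulVec_add (M : Matrix q m ℝ) (b : q → ℝ) (p : m → ℝ) :
    HasFDerivAt (fun v => 1 / 2 * ((M *ᵥ v + b) ⬝ᵥ (M *ᵥ v + b)))
      (dotProductCLM (Mᵀ *ᵥ (M *ᵥ p + b))) p := by
  have hA : HasFDerivAt (fun v => M *ᵥ v + b) (LinearMap.toContinuousLinearMap M.mulVecLin) p :=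
    (LinearMap.toContinuousLinearMap M.mulVecLin).hasFDerivAt.add_const b
  refine (((LinearMap.toContinuousLinearMap dotProductCLM).hasFDerivAt_of_bilinear
    hA hA).const_mul (1 / 2)).congr_fderiv ?_
  ext h
  simp only [one_div, ContinuousLinearMap.precompR_apply, LinearMap.coe_toContinuousLinearMap',
    map_add, _root_.add_apply, ContinuousLinearMap.compL_apply, smul_add, _root_.smul_apply,
    ContinuousLinearMap.comp_apply, mulVecBilin_apply, dotProductCLM_apply, dotProduct_mulVec,
    smul_eq_mul, ContinuousLinearMap.precompL_apply, dotProduct_comm (M *ᵥ h), mulVec_transpose,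
    add_vecMul]
  ring

end DotProduct

section PredictiveCoding

variable {n : ℕ → ℕ} (W : ∀ k : ℕ, Matrix (Fin (n k)) (Fin (n (k - 1))) ℝ)

def predError (a : ∀ k : ℕ, Fin (n k) → ℝ) (k : ℕ) : Fin (n k) → ℝ :=
  a k - W k *ᵥ a (k - 1)

noncomputable def pcEnergy (L : ℕ) (a : ∀ k : ℕ, Fin (n k) → ℝ) : ℝ :=
  ∑ k ∈ Finset.Icc 1 L, 1 / 2 * (predError W a k ⬝ᵥ predError W a k)

variable {W} {a : ∀ k : ℕ, Fin (n k) → ℝ} {l : ℕ}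

lemma predError_update_self (hl : 1 ≤ l) (v : Fin (n l) → ℝ) :
    predError W (Function.update a l v) l = v - W l *ᵥ a (l - 1) := by
  rw [predError, Function.update_self, Function.update_of_ne (by omega)]

lemma predError_update_succ (v : Fin (n l) → ℝ) :
    predError W (Function.update a l v) (l + 1) = a (l + 1) - W (l + 1) *ᵥ v := by
  rw [predError, Function.update_of_ne (by omega)]
  -- `l + 1 - 1` is `l` only up to defeq, so `update_self` cannot be used by `rw`
  exact congrArg _ (congrArg _ (Function.update_self l v a))

lemma predError_update_of_ne {k : ℕ} (hk : k ≠ l) (hk' : k - 1 ≠ l) (v : Fin (n l) → ℝ) :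
    predError W (Function.update a l v) k = predError W a k := by
  rw [predError, Function.update_of_ne hk, Function.update_of_ne hk', predError]

lemma pcEnergy_update (L : ℕ) (hl : 1 ≤ l) (hlL : l + 1 ≤ L) (v : Fin (n l) → ℝ) :
    pcEnergy W L (Function.update a l v) =
      1 / 2 * ((v - W l *ᵥ a (l - 1)) ⬝ᵥ (v - W l *ᵥ a (l - 1))) +
      (1 / 2 * ((a (l + 1) - W (l + 1) *ᵥ v) ⬝ᵥ (a (l + 1) - W (l + 1) *ᵥ v)) +
        ∑ k ∈ ((Finset.Icc 1 L).erase l).erase (l + 1),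
          1 / 2 * (predError W a k ⬝ᵥ predError W a k)) := by
  rw [pcEnergy, ← Finset.add_sum_erase _ _ (Finset.mem_Icc.2 ⟨hl, by omega⟩),
    ← Finset.add_sum_erase _ _ (Finset.mem_erase.2 ⟨by omega, Finset.mem_Icc.2 ⟨by omega, hlL⟩⟩),
    predError_update_self hl, predError_update_succ]
  congr 2
  refine Finset.sum_congr rfl fun k hk => ?_
  simp only [Finset.mem_erase, Finset.mem_Icc] at hk
  rw [predError_update_of_ne hk.2.1 (by omega)]

lemma hasFDerivAt_pcEnergy_update (L : ℕ) (hl : 1 ≤ l) (hlL : l + 1 ≤ L) :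
    HasFDerivAt (fun v => pcEnergy W L (Function.update a l v))
      (dotProductCLM (predError W a l -
        ((W (l + 1))ᵀ *ᵥ predError W a (l + 1) : Fin (n l) → ℝ))) (a l) := by
  have hself := hasFDerivAt_half_dotProduct_self_mulVec_add 1 (-(W l *ᵥ a (l - 1))) (a l)
  have hsucc := hasFDerivAt_half_dotProduct_self_mulVec_add (-W (l + 1)) (a (l + 1)) (a l)
  simp only [one_mulVec, ← sub_eq_add_neg, neg_mulVec, neg_add_eq_sub] at hself hsucc
  rw [funext (pcEnergy_update L hl hlL)]
  refine (hself.add (hsucc.add_const _)).congr_fderiv ?_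
  rw [← map_add, transpose_one, one_mulVec, transpose_neg, neg_mulVec, ← sub_eq_add_neg]
  rfl

end PredictiveCoding

lemma eq_transpose_mulVec_of_eq_transpose_mulVec_succ {n : ℕ → ℕ} {L : ℕ}
    {W : ∀ k : ℕ, Matrix (Fin (n k)) (Fin (n (k - 1))) ℝ}
    {P : ∀ k : ℕ, Matrix (Fin (n L)) (Fin (n k)) ℝ}
    (hPL : P L = 1) (hP : ∀ k : ℕ, k < L → P k = P (k + 1) * W (k + 1))
    {e : ∀ k : ℕ, Fin (n k) → ℝ}
    (he : ∀ k : ℕ, 1 ≤ k → k < L → e k = ((W (k + 1))ᵀ *ᵥ e (k + 1) : Fin (n k) → ℝ))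
    {l : ℕ} (hl : 1 ≤ l) (hlL : l ≤ L) :
    e l = (P l)ᵀ *ᵥ e L := by
  induction hlL using Nat.decreasingInduction with
  | self => rw [hPL, transpose_one, one_mulVec]
  | of_succ k hkL ih =>
    rw [he k hl hkL, ih (by omega), hP k hkL, transpose_mul, mulVec_mulVec]

theorem stmt3_general
    (L : ℕ) (n : ℕ → ℕ)
    (W : ∀ k : ℕ, Matrix (Fin (n k)) (Fin (n (k - 1))) ℝ)
    (P : ∀ k : ℕ, Matrix (Fin (n L)) (Fin (n k)) ℝ)
    (hPL : P L = 1)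
    (hP : ∀ k : ℕ, k < L → P k = P (k + 1) * W (k + 1))
    (a : ∀ k : ℕ, Fin (n k) → ℝ) :
    -- (i) the gradient of `E` with respect to the hidden activity `x_l` is
    --     `ε_l − W_{l+1}ᵀ ε_{l+1}`:
    (∀ l : ℕ, 1 ≤ l → l ≤ L - 1 →
      ∀ φ : (Fin (n l) → ℝ) →L[ℝ] ℝ,
        (∀ h : Fin (n l) → ℝ, φ h =
          ((a l - W l *ᵥ a (l - 1)) - ((W (l + 1))ᵀ *ᵥ (a (l + 1) - W (l + 1) *ᵥ a l) : Fin (n l) → ℝ)) ⬝ᵥ h) →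
        HasFDerivAt
          (fun v : Fin (n l) → ℝ =>
            ∑ k ∈ Finset.Icc 1 L, (1 / 2 : ℝ) *
              ((Function.update a l v k - W k *ᵥ Function.update a l v (k - 1)) ⬝ᵥ
               (Function.update a l v k - W k *ᵥ Function.update a l v (k - 1))))
          φ (a l)) ∧
    -- (ii) at inference equilibrium, `ε_l = W_{L:l+1}ᵀ ε_L` for all `l = 1, …, L`:
    ((∀ l : ℕ, 1 ≤ l → l ≤ L - 1 →
        a l - W l *ᵥ a (l - 1) = ((W (l + 1))ᵀ *ᵥ (a (l + 1) - W (l + 1) *ᵥ a l) : Fin (n l) → ℝ)) →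
      ∀ l : ℕ, 1 ≤ l → l ≤ L →
        a l - W l *ᵥ a (l - 1) = (P l)ᵀ *ᵥ (a L - W L *ᵥ a (L - 1))) := by
  refine ⟨fun l hl hlL φ hφ => ?_, fun hEq l hl hlL => ?_⟩
  · obtain rfl : φ = dotProductCLM (predError W a l -
        ((W (l + 1))ᵀ *ᵥ predError W a (l + 1) : Fin (n l) → ℝ)) := ContinuousLinearMap.ext hφ
    exact hasFDerivAt_pcEnergy_update L hl (by omega)
  · exact eq_transpose_mulVec_of_eq_transpose_mulVec_succ (e := predError W a) hPL hP
      (fun k hk hkL => hEq k hk (by omega)) hl hlL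

/-- For each hidden layer `1 ≤ l ≤ L−1`, the gradient of the PC
energy `E = ∑_{k=1}^L (1/2)‖x_k − W_k x_{k−1}‖²` with respect to the activity `x_l`
equals `ε_l − W_{l+1}ᵀ ε_{l+1}` (where `ε_k = x_k − W_k x_{k−1}`).  Consequently, if
the activities are at inference equilibrium (all these gradients vanish), then
`ε_l = W_{L:l+1}ᵀ ε_L` for every `l = 1, …, L`.  Here `a` is the family of
activities (with `a 0 = x` clamped to the input and `a L = y` to the target) and
`P l = W_{L:l+1}` are the partial products. -/
theorem stmt3
    (L : ℕ) (hL : 1 ≤ L) (n : ℕ → ℕ)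
    (W : ∀ k : ℕ, Matrix (Fin (n k)) (Fin (n (k - 1))) ℝ)
    (P : ∀ k : ℕ, Matrix (Fin (n L)) (Fin (n k)) ℝ)
    (hPL : P L = 1)
    (hP : ∀ k : ℕ, k < L → P k = P (k + 1) * W (k + 1))
    (x : Fin (n 0) → ℝ) (y : Fin (n L) → ℝ)
    (a : ∀ k : ℕ, Fin (n k) → ℝ) (ha0 : a 0 = x) (haL : a L = y) :
    -- (i) the gradient of `E` with respect to the hidden activity `x_l` is
    --     `ε_l − W_{l+1}ᵀ ε_{l+1}`:
    (∀ l : ℕ, 1 ≤ l → l ≤ L - 1 →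
      ∀ φ : (Fin (n l) → ℝ) →L[ℝ] ℝ,
        (∀ h : Fin (n l) → ℝ, φ h =
          ((a l - W l *ᵥ a (l - 1)) - ((W (l + 1))ᵀ *ᵥ (a (l + 1) - W (l + 1) *ᵥ a l) : Fin (n l) → ℝ)) ⬝ᵥ h) →
        HasFDerivAt
          (fun v : Fin (n l) → ℝ =>
            ∑ k ∈ Finset.Icc 1 L, (1 / 2 : ℝ) *
              ((Function.update a l v k - W k *ᵥ Function.update a l v (k - 1)) ⬝ᵥ
               (Function.update a l v k - W k *ᵥ Function.update a l v (k - 1))))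
          φ (a l)) ∧
    -- (ii) at inference equilibrium, `ε_l = W_{L:l+1}ᵀ ε_L` for all `l = 1, …, L`:
    ((∀ l : ℕ, 1 ≤ l → l ≤ L - 1 →
        a l - W l *ᵥ a (l - 1) = ((W (l + 1))ᵀ *ᵥ (a (l + 1) - W (l + 1) *ᵥ a l) : Fin (n l) → ℝ)) →
      ∀ l : ℕ, 1 ≤ l → l ≤ L →
        a l - W l *ᵥ a (l - 1) = (P l)ᵀ *ᵥ (a L - W L *ᵥ a (L - 1))) :=
  stmt3_general L n W P hPL hP a
end

section
/- Suppose activities x_0 = x, x_1, …, x_{L−1}, x_L = y of a deep linear network satisfy the equilibrium relations ε_l = W_{L:l+1}ᵀ ε_L for all l = 1, …, L, where ε_l = x_l − W_l x_{l−1}. Then the output residual satisfies r = y − W_{L:1} x = S ε_L, where S = ∑_{l=1}^{L} W_{L:l+1} W_{L:l+1}ᵀ; since S is invertible, ε_L = S⁻¹ r. -/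
open Matrix

lemma sum_mulVec' {m k : Type*} [Fintype m] [Fintype k] {ι : Type*} (s : Finset ι)
    (M : ι → Matrix m k ℝ) (v : k → ℝ) :
    (∑ i ∈ s, M i) *ᵥ v = ∑ i ∈ s, M i *ᵥ v := by
  ext j
  simp only [Matrix.mulVec, dotProduct, Finset.sum_apply, Matrix.sum_apply,
    Finset.sum_mul]
  rw [Finset.sum_comm]

/-- If the activities `x_0 = x, …, x_L = y` of a deep linear network
satisfy the equilibrium relations `ε_l = W_{L:l+1}ᵀ ε_L` for all `l = 1, …, L`
(where `ε_l = x_l − W_l x_{l−1}`), then the output residual satisfies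
`r = y − W_{L:1} x = S ε_L` with `S = ∑_{l=1}^L W_{L:l+1} W_{L:l+1}ᵀ`; since `S` is
invertible, `ε_L = S⁻¹ r`.  Here `a` is the family of activities and
`P l = W_{L:l+1}` are the partial products. -/
theorem stmt4
    (L : ℕ) (hL : 1 ≤ L) (n : ℕ → ℕ)
    (W : ∀ k : ℕ, Matrix (Fin (n k)) (Fin (n (k - 1))) ℝ)
    (P : ∀ k : ℕ, Matrix (Fin (n L)) (Fin (n k)) ℝ)
    (hPL : P L = 1)
    (hP : ∀ k : ℕ, k < L → P k = P (k + 1) * W (k + 1))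
    (x : Fin (n 0) → ℝ) (y : Fin (n L) → ℝ)
    (a : ∀ k : ℕ, Fin (n k) → ℝ) (ha0 : a 0 = x) (haL : a L = y)
    (heq : ∀ l : ℕ, 1 ≤ l → l ≤ L →
      a l - W l *ᵥ a (l - 1) = (P l)ᵀ *ᵥ (a L - W L *ᵥ a (L - 1))) :
    y - P 0 *ᵥ x =
      (∑ l ∈ Finset.Icc 1 L, P l * (P l)ᵀ) *ᵥ (a L - W L *ᵥ a (L - 1)) ∧
    a L - W L *ᵥ a (L - 1) =
      (∑ l ∈ Finset.Icc 1 L, P l * (P l)ᵀ)⁻¹ *ᵥ (y - P 0 *ᵥ x) := by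
  set ε := a L - W L *ᵥ a (L - 1) with hε
  set S := ∑ l ∈ Finset.Icc 1 L, P l * (P l)ᵀ with hS
  -- step lemma
  have step : ∀ i, i < L →
      P (i + 1) *ᵥ a (i + 1) - P i *ᵥ a i = (P (i + 1) * (P (i + 1))ᵀ) *ᵥ ε := by
    intro i hi
    have h : a (i + 1) - W (i + 1) *ᵥ a i = (P (i + 1))ᵀ *ᵥ ε :=
      heq (i + 1) (by omega) (by omega)
    rw [hP i hi, ← Matrix.mulVec_mulVec, ← Matrix.mulVec_sub, h,
      Matrix.mulVec_mulVec]
  -- telescoping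
  have tele : ∑ i ∈ Finset.range L, (P (i + 1) *ᵥ a (i + 1) - P i *ᵥ a i)
      = P L *ᵥ a L - P 0 *ᵥ a 0 := Finset.sum_range_sub (fun i => P i *ᵥ a i) L
  have part1 : y - P 0 *ᵥ x = S *ᵥ ε := by
    have h1 : y - P 0 *ᵥ x = P L *ᵥ a L - P 0 *ᵥ a 0 := by
      rw [hPL, haL, ha0, Matrix.one_mulVec]
    rw [h1, ← tele, hS, sum_mulVec']
    rw [← Finset.Ico_add_one_right_eq_Icc, Finset.sum_Ico_eq_sum_range]
    refine Finset.sum_congr rfl fun i hi => ?_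
    rw [Finset.mem_range] at hi
    rw [add_comm 1 i]
    exact step i hi
  refine ⟨part1, ?_⟩
  -- invertibility of S
  have hSd : S.PosDef := by
    clear_value S ε
    clear part1 tele step heq hε
    obtain ⟨M, rfl⟩ : ∃ M, L = M + 1 := ⟨L - 1, by omega⟩
    subst hS
    rw [Finset.sum_Icc_succ_top (Nat.le_add_left 1 M)]
    have hpsd : (∑ l ∈ Finset.Icc 1 M, P l * (P l)ᵀ).PosSemidef := by
      refine Finset.sum_induction _ _ (fun A B hA hB => hA.add hB) Matrix.PosSemidef.zero ?_
      intro l _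
      have := Matrix.posSemidef_self_mul_conjTranspose (P l)
      rwa [Matrix.conjTranspose_eq_transpose_of_trivial] at this
    have hone : (P (M + 1) * (P (M + 1))ᵀ).PosDef := by
      rw [hPL]
      simp only [Matrix.transpose_one, mul_one]
      exact Matrix.PosDef.one
    exact Matrix.PosDef.posSemidef_add hpsd hone
  have hU : IsUnit S.det := hSd.det_pos.ne'.isUnit
  rw [part1, Matrix.mulVec_mulVec, Matrix.nonsing_inv_mul S hU, Matrix.one_mulVec]
end

section
/- Let activities x_0* = x, x_1*, …, x_{L−1}*, x_L* = y of a deep linear network be at inference equilibrium, so that ε_l* = W_{L:l+1}ᵀ ε_L* and ε_L* = S⁻¹ r, where ε_l* = x_l* − W_l x_{l−1}* and r = y − W_{L:1} x. Then for each layer l = 1, …, L, the negative gradient of the PC energy E with respect to W_l (with the activities held fixed at their equilibrium values, under the Frobenius inner product) equals ε_l* x_{l−1}*ᵀ = W_{L:l+1}ᵀ S⁻¹ r x_{l−1}*ᵀ. -/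
/-!
Only the `l`-th summand of the PC energy depends on `W_l`, and it is half the squared norm of the
prediction error `x_l - W_l x_{l-1}`, which is affine in `W_l` with linear part `H ↦ -H x_{l-1}`.
The chain rule then makes `-ε_l x_{l-1}ᵀ` the Frobenius gradient, and substituting the equilibrium
conditions `ε_l = W_{L:l+1}ᵀ ε_L`, `ε_L = S⁻¹ r` into `ε_l x_{l-1}ᵀ` gives the closed form.
-/

open Matrix

section DotProduct

variable {𝕜 ι E : Type*} [NontriviallyNormedField 𝕜] [Fintype ι]
  [NormedAddCommGroup E] [NormedSpace 𝕜 E] {f g : E → ι → 𝕜} {f' g' : E →L[𝕜] ι → 𝕜} {x : E}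

theorem HasFDerivAt.dotProduct (hf : HasFDerivAt f f' x) (hg : HasFDerivAt g g' x) :
    HasFDerivAt (fun y => f y ⬝ᵥ g y)
      (∑ i, (f x i • (ContinuousLinearMap.proj i).comp g' +
        g x i • (ContinuousLinearMap.proj i).comp f')) x :=
  HasFDerivAt.fun_sum fun i _ => (hasFDerivAt_pi'.1 hf i).mul (hasFDerivAt_pi'.1 hg i)

end DotProduct

namespace Matrix

variable {m k : Type*} [Fintype m] [Fintype k]

noncomputable def mulVecCLM (v : k → ℝ) : (m → k → ℝ) →L[ℝ] m → ℝ :=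
  LinearMap.toContinuousLinearMap
    { toFun := fun H => of H *ᵥ v
      map_add' := fun H H' => add_mulVec (of H) (of H') v
      map_smul' := fun c H => smul_mulVec c (of H) v }

@[simp]
theorem mulVecCLM_apply (v : k → ℝ) (H : m → k → ℝ) : mulVecCLM v H = of H *ᵥ v := rfl

noncomputable def frobeniusCLM (G : Matrix m k ℝ) : (m → k → ℝ) →L[ℝ] ℝ :=
  ∑ i, ∑ j, G i j • (ContinuousLinearMap.proj j).comp
    (ContinuousLinearMap.proj (R := ℝ) (φ := fun _ : m => k → ℝ) i)

@[simp]
theorem frobeniusCLM_apply (G : Matrix m k ℝ) (H : m → k → ℝ) :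
    frobeniusCLM G H = ∑ i, ∑ j, G i j * H i j := by
  simp [frobeniusCLM]

end Matrix

namespace PredictiveCoding

section LayerEnergy

variable {m k : Type*} [Fintype m] [Fintype k]

noncomputable def layerEnergy (b : m → ℝ) (M : Matrix m k ℝ) (v : k → ℝ) : ℝ :=
  (1 / 2 : ℝ) * ((b - M *ᵥ v) ⬝ᵥ (b - M *ᵥ v))

theorem hasFDerivAt_layerEnergy (b : m → ℝ) (v : k → ℝ) (M₀ : m → k → ℝ) :
    HasFDerivAt (fun M : m → k → ℝ => layerEnergy b (of M) v)
      (frobeniusCLM (-vecMulVec (b - of M₀ *ᵥ v) v)) M₀ := by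
  have hres : HasFDerivAt (fun M : m → k → ℝ => b - of M *ᵥ v) (-mulVecCLM v) M₀ :=
    (mulVecCLM v).hasFDerivAt.const_sub b
  unfold layerEnergy
  refine ((hres.dotProduct hres).const_mul (1 / 2 : ℝ)).congr_fderiv ?_
  ext H
  simp only [one_div, Pi.sub_apply, mulVec, dotProduct, of_apply, ContinuousLinearMap.comp_neg,
    smul_neg, _root_.smul_apply, _root_.sum_apply, _root_.add_apply, _root_.neg_apply,
    ContinuousLinearMap.comp_apply, mulVecCLM_apply, ContinuousLinearMap.proj_apply, smul_eq_mul,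
    Finset.mul_sum, frobeniusCLM_apply, Matrix.neg_apply, vecMulVec_apply, neg_mul,
    Finset.sum_neg_distrib]
  rw [← Finset.sum_neg_distrib]
  refine Finset.sum_congr rfl fun i _ => ?_
  rw [← Finset.sum_neg_distrib, ← Finset.sum_add_distrib, Finset.mul_sum,
    ← Finset.sum_neg_distrib]
  exact Finset.sum_congr rfl fun j _ => by ring

end LayerEnergy

noncomputable def energy (L : ℕ) {n : ℕ → ℕ} (W : ∀ k, Matrix (Fin (n k)) (Fin (n (k - 1))) ℝ)
    (a : ∀ k, Fin (n k) → ℝ) : ℝ :=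
  ∑ k ∈ Finset.Icc 1 L, layerEnergy (a k) (W k) (a (k - 1))

theorem energy_update {L l : ℕ} (hl : l ∈ Finset.Icc 1 L) {n : ℕ → ℕ}
    (W : ∀ k, Matrix (Fin (n k)) (Fin (n (k - 1))) ℝ) (a : ∀ k, Fin (n k) → ℝ)
    (M : Matrix (Fin (n l)) (Fin (n (l - 1))) ℝ) :
    energy L (Function.update W l M) a = layerEnergy (a l) M (a (l - 1)) +
      ∑ k ∈ (Finset.Icc 1 L).erase l, layerEnergy (a k) (W k) (a (k - 1)) := by
  rw [energy, ← Finset.add_sum_erase _ _ hl, Function.update_self]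
  congr 1
  exact Finset.sum_congr rfl fun k hk => by rw [Function.update_of_ne (Finset.ne_of_mem_erase hk)]

end PredictiveCoding

open PredictiveCoding

theorem stmt6_general
    (L : ℕ) (n : ℕ → ℕ)
    (W : ∀ k : ℕ, Matrix (Fin (n k)) (Fin (n (k - 1))) ℝ)
    (P : ∀ k : ℕ, Matrix (Fin (n L)) (Fin (n k)) ℝ)
    (x : Fin (n 0) → ℝ) (y : Fin (n L) → ℝ)
    (a : ∀ k : ℕ, Fin (n k) → ℝ)
    (heq : ∀ l : ℕ, 1 ≤ l → l ≤ L →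
      a l - W l *ᵥ a (l - 1) = (P l)ᵀ *ᵥ (a L - W L *ᵥ a (L - 1)))
    (heqL : a L - W L *ᵥ a (L - 1) =
      (∑ k ∈ Finset.Icc 1 L, P k * (P k)ᵀ)⁻¹ *ᵥ (y - P 0 *ᵥ x))
    (l : ℕ) (hl1 : 1 ≤ l) (hlL : l ≤ L)
    (φ : (Fin (n l) → Fin (n (l - 1)) → ℝ) →L[ℝ] ℝ)
    (hφ : ∀ H : Fin (n l) → Fin (n (l - 1)) → ℝ,
      φ H = ∑ i, ∑ j,
        (-(vecMulVec (a l - W l *ᵥ a (l - 1)) (a (l - 1)))) i j * H i j) :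
    -- the Fréchet derivative of the PC energy in `W_l` is represented (under the
    -- Frobenius inner product) by `−ε*_l x*_{l−1}ᵀ`, i.e. the negative gradient is
    -- `ε*_l x*_{l−1}ᵀ` …
    HasFDerivAt
      (fun M : Fin (n l) → Fin (n (l - 1)) → ℝ =>
        ∑ k ∈ Finset.Icc 1 L, (1 / 2 : ℝ) *
          ((a k - (Function.update W l (Matrix.of M) k) *ᵥ a (k - 1)) ⬝ᵥ
           (a k - (Function.update W l (Matrix.of M) k) *ᵥ a (k - 1))))
      φ (fun i j => W l i j) ∧
    -- … and this matrix equals `W_{L:l+1}ᵀ S⁻¹ r x*_{l−1}ᵀ`: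
    vecMulVec (a l - W l *ᵥ a (l - 1)) (a (l - 1)) =
      (P l)ᵀ * ((∑ k ∈ Finset.Icc 1 L, P k * (P k)ᵀ)⁻¹ *
        vecMulVec (y - P 0 *ᵥ x) (a (l - 1))) := by
  refine ⟨?_, by rw [heq l hl1 hlL, heqL, mul_vecMulVec, mul_vecMulVec]⟩
  have hφ_eq : φ = frobeniusCLM (-vecMulVec (a l - W l *ᵥ a (l - 1)) (a (l - 1))) := by
    ext H
    rw [hφ, frobeniusCLM_apply]
  change HasFDerivAt (fun M => energy L (Function.update W l (of M)) a) φ (fun i j => W l i j)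
  simp_rw [energy_update (Finset.mem_Icc.2 ⟨hl1, hlL⟩)]
  rw [hφ_eq]
  exact (hasFDerivAt_layerEnergy _ _ _).add_const _

/-- Let activities `x*_0 = x, …, x*_L = y` of a deep linear network
be at inference equilibrium, so that `ε*_l = W_{L:l+1}ᵀ ε*_L` and `ε*_L = S⁻¹ r`,
with `ε*_l = x*_l − W_l x*_{l−1}` and `r = y − W_{L:1} x`.  Then for each layer
`l = 1, …, L` the negative gradient of the PC energy `E` with respect to `W_l`
(activities held fixed at equilibrium, Frobenius inner product) equals
`ε*_l x*_{l−1}ᵀ = W_{L:l+1}ᵀ S⁻¹ r x*_{l−1}ᵀ`.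
Here `a` is the family of equilibrium activities and `P l = W_{L:l+1}`. -/
theorem stmt6
    (L : ℕ) (hL : 1 ≤ L) (n : ℕ → ℕ)
    (W : ∀ k : ℕ, Matrix (Fin (n k)) (Fin (n (k - 1))) ℝ)
    (P : ∀ k : ℕ, Matrix (Fin (n L)) (Fin (n k)) ℝ)
    (hPL : P L = 1)
    (hP : ∀ k : ℕ, k < L → P k = P (k + 1) * W (k + 1))
    (x : Fin (n 0) → ℝ) (y : Fin (n L) → ℝ)
    (a : ∀ k : ℕ, Fin (n k) → ℝ) (ha0 : a 0 = x) (haL : a L = y)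
    (heq : ∀ l : ℕ, 1 ≤ l → l ≤ L →
      a l - W l *ᵥ a (l - 1) = (P l)ᵀ *ᵥ (a L - W L *ᵥ a (L - 1)))
    (heqL : a L - W L *ᵥ a (L - 1) =
      (∑ k ∈ Finset.Icc 1 L, P k * (P k)ᵀ)⁻¹ *ᵥ (y - P 0 *ᵥ x))
    (l : ℕ) (hl1 : 1 ≤ l) (hlL : l ≤ L)
    (φ : (Fin (n l) → Fin (n (l - 1)) → ℝ) →L[ℝ] ℝ)
    (hφ : ∀ H : Fin (n l) → Fin (n (l - 1)) → ℝ,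
      φ H = ∑ i, ∑ j,
        (-(vecMulVec (a l - W l *ᵥ a (l - 1)) (a (l - 1)))) i j * H i j) :
    -- the Fréchet derivative of the PC energy in `W_l` is represented (under the
    -- Frobenius inner product) by `−ε*_l x*_{l−1}ᵀ`, i.e. the negative gradient is
    -- `ε*_l x*_{l−1}ᵀ` …
    HasFDerivAt
      (fun M : Fin (n l) → Fin (n (l - 1)) → ℝ =>
        ∑ k ∈ Finset.Icc 1 L, (1 / 2 : ℝ) *
          ((a k - (Function.update W l (Matrix.of M) k) *ᵥ a (k - 1)) ⬝ᵥ
           (a k - (Function.update W l (Matrix.of M) k) *ᵥ a (k - 1))))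
      φ (fun i j => W l i j) ∧
    -- … and this matrix equals `W_{L:l+1}ᵀ S⁻¹ r x*_{l−1}ᵀ`:
    vecMulVec (a l - W l *ᵥ a (l - 1)) (a (l - 1)) =
      (P l)ᵀ * ((∑ k ∈ Finset.Icc 1 L, P k * (P k)ᵀ)⁻¹ *
        vecMulVec (y - P 0 *ᵥ x) (a (l - 1))) :=
  stmt6_general L n W P x y a heq heqL l hl1 hlL φ hφ
end

section
/- If each weight matrix W_l(t) evolves under the predictive coding gradient flow dW_l/dt = W_{L:l+1}ᵀ S⁻¹ r x*_{l−1}ᵀ, where x*_{l−1}(t) ∈ ℝ^{n_{l−1}} are any given vectors and all other quantities are formed from the weights at time t, then the prediction ŷ(t) = W_{L:1}(t) x satisfies dŷ/dt = ∑_{l=1}^{L} W_{L:l+1} W_{L:l+1}ᵀ S⁻¹ r (x*_{l−1}ᵀ x̂_{l−1}). -/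
open Matrix

/-!
By the Leibniz rule, `dŷ/dt = ∑_l W_{L:l+1} (dW_l/dt) W_{l-1:1} x`. Substituting the flow turns
the `l`-th term into `W_{L:l+1} W_{L:l+1}ᵀ S⁻¹ (r x*_{l−1}ᵀ) x̂_{l−1}`, and the rank-one matrix
`r x*_{l−1}ᵀ` sends `x̂_{l−1}` to `(x*_{l−1}ᵀ x̂_{l−1}) r`.
-/

section MatrixCalculus

variable {𝕜 : Type*} [NontriviallyNormedField 𝕜] {l m n : Type*}

theorem hasDerivAt_matrix_iff [Fintype n] {A : 𝕜 → Matrix m n 𝕜} {A' : Matrix m n 𝕜} {t : 𝕜} :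
    HasDerivAt A A' t ↔ ∀ i j, HasDerivAt (fun s => A s i j) (A' i j) t :=
  hasDerivAt_pi.trans (forall_congr' fun _ => hasDerivAt_pi)

theorem HasDerivAt.matrix_mul [Fintype m] [Fintype n] {A : 𝕜 → Matrix l m 𝕜}
    {B : 𝕜 → Matrix m n 𝕜} {A' : Matrix l m 𝕜} {B' : Matrix m n 𝕜} {t : 𝕜}
    (hA : HasDerivAt A A' t) (hB : HasDerivAt B B' t) :
    HasDerivAt (fun s => A s * B s) (A' * B t + A t * B') t := by
  rw [hasDerivAt_matrix_iff] at hA hB ⊢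
  intro i j
  simp only [mul_apply, Matrix.add_apply, ← Finset.sum_add_distrib]
  exact HasDerivAt.fun_sum fun c _ => (hA i c).mul (hB c j)

theorem HasDerivAt.matrix_mulVec_const [Fintype n] {A : 𝕜 → Matrix m n 𝕜} {A' : Matrix m n 𝕜}
    {t : 𝕜}
    (hA : HasDerivAt A A' t) (x : n → 𝕜) :
    HasDerivAt (fun s => A s *ᵥ x) (A' *ᵥ x) t := by
  rw [hasDerivAt_matrix_iff] at hA
  refine hasDerivAt_pi.2 fun i => ?_
  simp only [mulVec, dotProduct]
  exact HasDerivAt.fun_sum fun j _ => (hA i j).mul_const (x j)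

end MatrixCalculus

section ChainProduct

variable {𝕜 : Type*} [NontriviallyNormedField 𝕜] {m ι : Type*}
  {L : ℕ} {n : ℕ → ℕ} {W : ∀ k : ℕ, 𝕜 → Matrix (Fin (n k)) (Fin (n (k - 1))) 𝕜}
  {W' : ∀ k : ℕ, Matrix (Fin (n k)) (Fin (n (k - 1))) 𝕜}
  {P : ∀ k : ℕ, 𝕜 → Matrix m (Fin (n k)) 𝕜} {Q : ∀ k : ℕ, Matrix (Fin (n k)) ι 𝕜} {t₀ : 𝕜}

/-- Only `P' * Q k` is pinned down, `Q` being the prefix products frozen at `t₀`: this avoids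
naming the middle products `W_{l-1} ⋯ W_{k+1}` of the derivative of `P k = P L ⋯ W_{k+1}`. -/
theorem exists_hasDerivAt_suffixProd_mul_prefixProd (hPL : HasDerivAt (P L) 0 t₀)
    (hP : ∀ k < L, P k = fun t => P (k + 1) t * W (k + 1) t)
    (hQ : ∀ k, 1 ≤ k → k ≤ L → Q k = W k t₀ * Q (k - 1))
    (hW : ∀ k, 1 ≤ k → k ≤ L → HasDerivAt (W k) (W' k) t₀) {k : ℕ} (hk : k ≤ L) :
    ∃ P', HasDerivAt (P k) P' t₀ ∧
      P' * Q k = ∑ l ∈ Finset.Icc (k + 1) L, P l t₀ * W' l * Q (l - 1) := by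
  induction hk using Nat.decreasingInduction with
  | self => exact ⟨0, hPL, by simp⟩
  | of_succ k hk ih =>
    obtain ⟨P', hP', hsum⟩ := ih
    rw [hQ (k + 1) k.succ_pos hk, ← Matrix.mul_assoc] at hsum
    refine ⟨_, hP k hk ▸ hP'.matrix_mul (hW (k + 1) k.succ_pos hk), ?_⟩
    rw [← Finset.insert_Icc_add_one_left_eq_Icc (Nat.succ_le_of_lt hk),
      Finset.sum_insert (by simp), ← hsum, add_comm, Matrix.add_mul]
    rfl

end ChainProduct

theorem mul_vecMulVec_mul_mulVec {R : Type*} [CommRing R] {l m n p : Type*}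
    [Fintype m] [Fintype n] [Fintype p]
    (A : Matrix l m R) (r : m → R) (u : n → R) (Q : Matrix n p R) (x : p → R) :
    (A * vecMulVec r u * Q) *ᵥ x = (u ⬝ᵥ (Q *ᵥ x)) • (A *ᵥ r) := by
  simp only [← mulVec_mulVec, vecMulVec_mulVec, op_smul_eq_smul, mulVec_smul]

theorem stmt7_general
    (L : ℕ) (n : ℕ → ℕ)
    (W : ∀ k : ℕ, ℝ → Matrix (Fin (n k)) (Fin (n (k - 1))) ℝ)
    (P : ∀ k : ℕ, ℝ → Matrix (Fin (n L)) (Fin (n k)) ℝ)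
    (hPL : ∀ t : ℝ, P L t = 1)
    (hP : ∀ t : ℝ, ∀ k : ℕ, k < L → P k t = P (k + 1) t * W (k + 1) t)
    (Q : ∀ k : ℕ, ℝ → Matrix (Fin (n k)) (Fin (n 0)) ℝ)
    (hQ0 : ∀ t : ℝ, Q 0 t = 1)
    (hQ : ∀ t : ℝ, ∀ k : ℕ, 1 ≤ k → k ≤ L → Q k t = W k t * Q (k - 1) t)
    (x : Fin (n 0) → ℝ) (y : Fin (n L) → ℝ) (t₀ : ℝ)
    (xs : ∀ k : ℕ, Fin (n k) → ℝ)
    (hW : ∀ l : ℕ, 1 ≤ l → l ≤ L → ∀ i j, HasDerivAt (fun t => W l t i j)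
      (((P l t₀)ᵀ * ((∑ k ∈ Finset.Icc 1 L, P k t₀ * (P k t₀)ᵀ)⁻¹ *
        vecMulVec (y - P 0 t₀ *ᵥ x) (xs (l - 1)))) i j) t₀) :
    HasDerivAt (fun t => P 0 t *ᵥ x)
      (∑ l ∈ Finset.Icc 1 L, (xs (l - 1) ⬝ᵥ (Q (l - 1) t₀ *ᵥ x)) •
        ((P l t₀ * (P l t₀)ᵀ * (∑ k ∈ Finset.Icc 1 L, P k t₀ * (P k t₀)ᵀ)⁻¹) *ᵥ
          (y - P 0 t₀ *ᵥ x))) t₀ := by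
  have hPL_const : HasDerivAt (P L) 0 t₀ := hasDerivAt_matrix_iff.2 fun i j => by
    simpa only [hPL, Matrix.zero_apply] using
      hasDerivAt_const t₀ ((1 : Matrix (Fin (n L)) (Fin (n L)) ℝ) i j)
  obtain ⟨P', hP', hsum⟩ := exists_hasDerivAt_suffixProd_mul_prefixProd (Q := fun k => Q k t₀)
    hPL_const (fun k hk => funext fun t => hP t k hk) (fun k h1 hk => hQ t₀ k h1 hk)
    (fun k h1 hk => hasDerivAt_matrix_iff.2 (hW k h1 hk)) (Nat.zero_le L)
  rw [hQ0, Matrix.mul_one] at hsum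
  convert hP'.matrix_mulVec_const x using 1
  rw [hsum, sum_mulVec]
  refine Finset.sum_congr rfl fun l _ => ?_
  rw [← Matrix.mul_assoc, ← Matrix.mul_assoc, mul_vecMulVec_mul_mulVec]

/-- If each weight matrix `W_l(t)` evolves under the predictive
coding gradient flow `dW_l/dt = W_{L:l+1}ᵀ S⁻¹ r x*_{l−1}ᵀ`, where `x*_{l−1}` are
any given vectors, then the prediction `ŷ(t) = W_{L:1}(t) x` satisfies
`dŷ/dt = ∑_{l=1}^L W_{L:l+1} W_{L:l+1}ᵀ S⁻¹ r (x*_{l−1}ᵀ x̂_{l−1})`.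
Here `P l t = W_{L:l+1}(t)`, `Q l t = W_{l:1}(t)`, and
`S = ∑_{k=1}^L W_{L:k+1} W_{L:k+1}ᵀ` (which is invertible). -/
theorem stmt7
    (L : ℕ) (hL : 1 ≤ L) (n : ℕ → ℕ)
    (W : ∀ k : ℕ, ℝ → Matrix (Fin (n k)) (Fin (n (k - 1))) ℝ)
    (P : ∀ k : ℕ, ℝ → Matrix (Fin (n L)) (Fin (n k)) ℝ)
    (hPL : ∀ t : ℝ, P L t = 1)
    (hP : ∀ t : ℝ, ∀ k : ℕ, k < L → P k t = P (k + 1) t * W (k + 1) t)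
    (Q : ∀ k : ℕ, ℝ → Matrix (Fin (n k)) (Fin (n 0)) ℝ)
    (hQ0 : ∀ t : ℝ, Q 0 t = 1)
    (hQ : ∀ t : ℝ, ∀ k : ℕ, 1 ≤ k → k ≤ L → Q k t = W k t * Q (k - 1) t)
    (x : Fin (n 0) → ℝ) (y : Fin (n L) → ℝ) (t₀ : ℝ)
    (xs : ∀ k : ℕ, Fin (n k) → ℝ)
    (hS : IsUnit (∑ k ∈ Finset.Icc 1 L, P k t₀ * (P k t₀)ᵀ).det)
    (hW : ∀ l : ℕ, 1 ≤ l → l ≤ L → ∀ i j, HasDerivAt (fun t => W l t i j)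
      (((P l t₀)ᵀ * ((∑ k ∈ Finset.Icc 1 L, P k t₀ * (P k t₀)ᵀ)⁻¹ *
        vecMulVec (y - P 0 t₀ *ᵥ x) (xs (l - 1)))) i j) t₀) :
    HasDerivAt (fun t => P 0 t *ᵥ x)
      (∑ l ∈ Finset.Icc 1 L, (xs (l - 1) ⬝ᵥ (Q (l - 1) t₀ *ᵥ x)) •
        ((P l t₀ * (P l t₀)ᵀ * (∑ k ∈ Finset.Icc 1 L, P k t₀ * (P k t₀)ᵀ)⁻¹) *ᵥ
          (y - P 0 t₀ *ᵥ x))) t₀ :=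
  stmt7_general L n W P hPL hP Q hQ0 hQ x y t₀ xs hW
end

section
/- Suppose at some time t the weights of a deep linear network evolve as dW_l/dt = W_{L:l+1}ᵀ S⁻¹ r x*_{l−1}ᵀ and the scalar products x*_{l−1}ᵀ x̂_{l−1} are equal to a common constant c for all l = 1, …, L. Then the change in prediction satisfies dŷ/dt = ∑_{l=1}^{L} W_{L:l+1} W_{L:l+1}ᵀ S⁻¹ r c = c r, i.e., the change in prediction is exactly proportional to the output residual. -/
open Matrix

/-!
Writing `ŷ = W_{L:k+1} (W_{k:1} x)` and peeling off one layer at a time, the product rule gives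
`dŷ/dt = ∑_l W_{L:l+1} (dW_l/dt) x̂_{l-1}`. For the prescribed flow the `l`-th term is
`(x*_{l-1}ᵀ x̂_{l-1}) W_{L:l+1} W_{L:l+1}ᵀ S⁻¹ r = c W_{L:l+1} W_{L:l+1}ᵀ S⁻¹ r`, and summing over `l`
turns the left factors into `S`, which cancels against `S⁻¹`.
-/

theorem HasDerivAt.matrix_mulVec {𝕜 : Type*} [NontriviallyNormedField 𝕜]
    {m n : Type*} [Fintype m] [Fintype n]
    {A : 𝕜 → Matrix m n 𝕜} {A' : Matrix m n 𝕜} {g : 𝕜 → n → 𝕜} {g' : n → 𝕜} {t₀ : 𝕜}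
    (hA : ∀ i j, HasDerivAt (fun t => A t i j) (A' i j) t₀) (hg : HasDerivAt g g' t₀) :
    HasDerivAt (fun t => A t *ᵥ g t) (A' *ᵥ g t₀ + A t₀ *ᵥ g') t₀ := by
  rw [hasDerivAt_pi] at hg ⊢
  intro i
  simp only [mulVec, dotProduct, Pi.add_apply, ← Finset.sum_add_distrib]
  exact HasDerivAt.fun_sum fun j _ => (hA i j).mul (hg j)

theorem mulVec_mul_vecMulVec_mulVec {R : Type*} [CommSemiring R] {l m n : Type*}
    [Fintype m] [Fintype n] (A : Matrix l m R) (u : m → R) (v w : n → R) :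
    (A * vecMulVec u v) *ᵥ w = (v ⬝ᵥ w) • (A *ᵥ u) := by
  rw [← mulVec_mulVec, vecMulVec_mulVec, op_smul_eq_smul, mulVec_smul]

namespace DeepLinearNetwork

variable {L : ℕ} {n : ℕ → ℕ}
  {W : ∀ k : ℕ, ℝ → Matrix (Fin (n k)) (Fin (n (k - 1))) ℝ}
  {P : ∀ k : ℕ, ℝ → Matrix (Fin (n L)) (Fin (n k)) ℝ}
  {Q : ∀ k : ℕ, ℝ → Matrix (Fin (n k)) (Fin (n 0)) ℝ}
  {W' : ∀ k : ℕ, Matrix (Fin (n k)) (Fin (n (k - 1))) ℝ} {x : Fin (n 0) → ℝ} {t₀ : ℝ}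

/-- Replacing `x̂_k` by any `g` with the same value at `t₀` is what lets the downward induction
feed `W_{k+1} g` back in. -/
theorem hasDerivAt_partialProduct_mulVec (hPL : ∀ t : ℝ, P L t = 1)
    (hP : ∀ t : ℝ, ∀ k : ℕ, k < L → P k t = P (k + 1) t * W (k + 1) t)
    (hQ : ∀ t : ℝ, ∀ k : ℕ, 1 ≤ k → k ≤ L → Q k t = W k t * Q (k - 1) t)
    (hW : ∀ l : ℕ, 1 ≤ l → l ≤ L → ∀ i j, HasDerivAt (fun t => W l t i j) (W' l i j) t₀)
    {k : ℕ} (hk : k ≤ L) {g : ℝ → Fin (n k) → ℝ} {g' : Fin (n k) → ℝ}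
    (hg : HasDerivAt g g' t₀) (hg₀ : g t₀ = Q k t₀ *ᵥ x) :
    HasDerivAt (fun t => P k t *ᵥ g t)
      (P k t₀ *ᵥ g' + ∑ l ∈ Finset.Icc (k + 1) L, P l t₀ *ᵥ (W' l *ᵥ (Q (l - 1) t₀ *ᵥ x))) t₀ := by
  induction hk using Nat.decreasingInduction with
  | self =>
    simpa [hPL] using hg
  | of_succ k hk ih =>
    have hWg := HasDerivAt.matrix_mulVec (hW (k + 1) (by omega) hk) hg
    have hWg₀ : W (k + 1) t₀ *ᵥ g t₀ = Q (k + 1) t₀ *ᵥ x := by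
      rw [hg₀, mulVec_mulVec, hQ t₀ (k + 1) (by omega) hk]
      rfl -- `k + 1 - 1` is `k` only up to definitional unfolding
    convert ih hWg hWg₀ using 1
    · funext t
      rw [hP t k hk, ← mulVec_mulVec]
    · rw [← Finset.insert_Icc_add_one_left_eq_Icc (by omega : k + 1 ≤ L),
        Finset.sum_insert (by simp), show g t₀ = Q (k + 1 - 1) t₀ *ᵥ x from hg₀, hP t₀ k hk,
        mulVec_add, ← mulVec_mulVec]
      abel

theorem hasDerivAt_prediction (hPL : ∀ t : ℝ, P L t = 1)
    (hP : ∀ t : ℝ, ∀ k : ℕ, k < L → P k t = P (k + 1) t * W (k + 1) t)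
    (hQ0 : ∀ t : ℝ, Q 0 t = 1)
    (hQ : ∀ t : ℝ, ∀ k : ℕ, 1 ≤ k → k ≤ L → Q k t = W k t * Q (k - 1) t)
    (hW : ∀ l : ℕ, 1 ≤ l → l ≤ L → ∀ i j, HasDerivAt (fun t => W l t i j) (W' l i j) t₀) :
    HasDerivAt (fun t => P 0 t *ᵥ x)
      (∑ l ∈ Finset.Icc 1 L, P l t₀ *ᵥ (W' l *ᵥ (Q (l - 1) t₀ *ᵥ x))) t₀ := by
  simpa using hasDerivAt_partialProduct_mulVec hPL hP hQ hW (Nat.zero_le L)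
    (hasDerivAt_const t₀ x) (by rw [hQ0, one_mulVec])

end DeepLinearNetwork

theorem stmt8_general
    (L : ℕ) (n : ℕ → ℕ)
    (W : ∀ k : ℕ, ℝ → Matrix (Fin (n k)) (Fin (n (k - 1))) ℝ)
    (P : ∀ k : ℕ, ℝ → Matrix (Fin (n L)) (Fin (n k)) ℝ)
    (hPL : ∀ t : ℝ, P L t = 1)
    (hP : ∀ t : ℝ, ∀ k : ℕ, k < L → P k t = P (k + 1) t * W (k + 1) t)
    (Q : ∀ k : ℕ, ℝ → Matrix (Fin (n k)) (Fin (n 0)) ℝ)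
    (hQ0 : ∀ t : ℝ, Q 0 t = 1)
    (hQ : ∀ t : ℝ, ∀ k : ℕ, 1 ≤ k → k ≤ L → Q k t = W k t * Q (k - 1) t)
    (x : Fin (n 0) → ℝ) (y : Fin (n L) → ℝ) (t₀ : ℝ)
    (xs : ∀ k : ℕ, Fin (n k) → ℝ) (c : ℝ)
    (hS : IsUnit (∑ k ∈ Finset.Icc 1 L, P k t₀ * (P k t₀)ᵀ).det)
    (hW : ∀ l : ℕ, 1 ≤ l → l ≤ L → ∀ i j, HasDerivAt (fun t => W l t i j)
      (((P l t₀)ᵀ * ((∑ k ∈ Finset.Icc 1 L, P k t₀ * (P k t₀)ᵀ)⁻¹ *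
        vecMulVec (y - P 0 t₀ *ᵥ x) (xs (l - 1)))) i j) t₀)
    (hc : ∀ l : ℕ, 1 ≤ l → l ≤ L → xs (l - 1) ⬝ᵥ (Q (l - 1) t₀ *ᵥ x) = c) :
    HasDerivAt (fun t => P 0 t *ᵥ x)
      (∑ l ∈ Finset.Icc 1 L, c •
        ((P l t₀ * (P l t₀)ᵀ * (∑ k ∈ Finset.Icc 1 L, P k t₀ * (P k t₀)ᵀ)⁻¹) *ᵥ
          (y - P 0 t₀ *ᵥ x))) t₀ ∧
    ∑ l ∈ Finset.Icc 1 L, c •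
        ((P l t₀ * (P l t₀)ᵀ * (∑ k ∈ Finset.Icc 1 L, P k t₀ * (P k t₀)ᵀ)⁻¹) *ᵥ
          (y - P 0 t₀ *ᵥ x)) =
      c • (y - P 0 t₀ *ᵥ x) := by
  set S := ∑ k ∈ Finset.Icc 1 L, P k t₀ * (P k t₀)ᵀ with hS_def
  refine ⟨?_, ?_⟩
  · convert DeepLinearNetwork.hasDerivAt_prediction hPL hP hQ0 hQ hW using 1
    refine Finset.sum_congr rfl fun l hl => ?_
    obtain ⟨hl₁, hlL⟩ := Finset.mem_Icc.mp hl
    rw [← Matrix.mul_assoc, mulVec_mul_vecMulVec_mulVec, hc l hl₁ hlL, mulVec_smul,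
      mulVec_mulVec, ← Matrix.mul_assoc]
  · rw [← Finset.smul_sum, ← sum_mulVec, ← Finset.sum_mul, ← hS_def, mul_nonsing_inv S hS,
      one_mulVec]

/-- Suppose at some time `t₀` the weights of a deep linear network
evolve as `dW_l/dt = W_{L:l+1}ᵀ S⁻¹ r x*_{l−1}ᵀ` and the scalar products
`x*_{l−1}ᵀ x̂_{l−1}` are all equal to a common constant `c` for `l = 1, …, L`.
Then `dŷ/dt = ∑_{l=1}^L W_{L:l+1} W_{L:l+1}ᵀ S⁻¹ r c = c r`, i.e. the change in
prediction is exactly proportional to the output residual.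
Here `P l t = W_{L:l+1}(t)`, `Q l t = W_{l:1}(t)`, and
`S = ∑_{k=1}^L W_{L:k+1} W_{L:k+1}ᵀ` (which is invertible). -/
theorem stmt8
    (L : ℕ) (hL : 1 ≤ L) (n : ℕ → ℕ)
    (W : ∀ k : ℕ, ℝ → Matrix (Fin (n k)) (Fin (n (k - 1))) ℝ)
    (P : ∀ k : ℕ, ℝ → Matrix (Fin (n L)) (Fin (n k)) ℝ)
    (hPL : ∀ t : ℝ, P L t = 1)
    (hP : ∀ t : ℝ, ∀ k : ℕ, k < L → P k t = P (k + 1) t * W (k + 1) t)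
    (Q : ∀ k : ℕ, ℝ → Matrix (Fin (n k)) (Fin (n 0)) ℝ)
    (hQ0 : ∀ t : ℝ, Q 0 t = 1)
    (hQ : ∀ t : ℝ, ∀ k : ℕ, 1 ≤ k → k ≤ L → Q k t = W k t * Q (k - 1) t)
    (x : Fin (n 0) → ℝ) (y : Fin (n L) → ℝ) (t₀ : ℝ)
    (xs : ∀ k : ℕ, Fin (n k) → ℝ) (c : ℝ)
    (hS : IsUnit (∑ k ∈ Finset.Icc 1 L, P k t₀ * (P k t₀)ᵀ).det)
    (hW : ∀ l : ℕ, 1 ≤ l → l ≤ L → ∀ i j, HasDerivAt (fun t => W l t i j)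
      (((P l t₀)ᵀ * ((∑ k ∈ Finset.Icc 1 L, P k t₀ * (P k t₀)ᵀ)⁻¹ *
        vecMulVec (y - P 0 t₀ *ᵥ x) (xs (l - 1)))) i j) t₀)
    (hc : ∀ l : ℕ, 1 ≤ l → l ≤ L → xs (l - 1) ⬝ᵥ (Q (l - 1) t₀ *ᵥ x) = c) :
    HasDerivAt (fun t => P 0 t *ᵥ x)
      (∑ l ∈ Finset.Icc 1 L, c •
        ((P l t₀ * (P l t₀)ᵀ * (∑ k ∈ Finset.Icc 1 L, P k t₀ * (P k t₀)ᵀ)⁻¹) *ᵥ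
          (y - P 0 t₀ *ᵥ x))) t₀ ∧
    ∑ l ∈ Finset.Icc 1 L, c •
        ((P l t₀ * (P l t₀)ᵀ * (∑ k ∈ Finset.Icc 1 L, P k t₀ * (P k t₀)ᵀ)⁻¹) *ᵥ
          (y - P 0 t₀ *ᵥ x)) =
      c • (y - P 0 t₀ *ᵥ x) :=
  stmt8_general L n W P hPL hP Q hQ0 hQ x y t₀ xs c hS hW hc
end

section
/- (Theorem 1: PC with adaptive learning rate.) Suppose each weight matrix W_l(t) of a deep linear network evolves as dW_l/dt = α_l W_{L:l+1}ᵀ S⁻¹ r x*_{l−1}ᵀ with layer-specific learning rates α_l = (x*_{l−1}ᵀ x̂_{l−1})⁻¹, where x*_{l−1}ᵀ x̂_{l−1} ≠ 0 for every l = 1, …, L. Then the change in the model prediction is exactly the output residual: dŷ/dt = r. -/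
/-!
Differentiating `ŷ = W_L ⋯ W_1 x` layer by layer gives `dŷ/dt = ∑_l W_{L:l+1} Ẇ_l x̂_{l-1}`.
The update `Ẇ_l` is rank one with right factor `x*_{l-1}`, so `Ẇ_l x̂_{l-1}` carries the scalar
`x*_{l-1}ᵀ x̂_{l-1}`, which the adaptive rate `α_l` cancels. Each term is then
`W_{L:l+1} W_{L:l+1}ᵀ S⁻¹ r`, and the sum is `S S⁻¹ r = r`.
-/

open Matrix Finset

variable {𝕜 : Type*} [NontriviallyNormedField 𝕜]

theorem hasDerivAt_mulVec {m n : Type*} [Fintype m] [Fintype n] {A : 𝕜 → Matrix m n 𝕜}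
    {A' : Matrix m n 𝕜} {v : 𝕜 → n → 𝕜} {v' : n → 𝕜} {t : 𝕜}
    (hA : ∀ i j, HasDerivAt (fun s => A s i j) (A' i j) t) (hv : HasDerivAt v v' t) :
    HasDerivAt (fun s => A s *ᵥ v s) (A' *ᵥ v t + A t *ᵥ v') t := by
  refine hasDerivAt_pi.2 fun i => ?_
  have := HasDerivAt.fun_sum (u := univ) fun j _ => (hA i j).mul (hasDerivAt_pi.1 hv j)
  simpa [mulVec, dotProduct, sum_add_distrib] using this

theorem inv_dotProduct_smul_mul_vecMulVec_mulVec {K : Type*} [Field K] {l m n : Type*}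
    [Fintype m] [Fintype n] (A : Matrix l m K) (r : m → K) {a b : n → K} (hab : a ⬝ᵥ b ≠ 0) :
    ((a ⬝ᵥ b)⁻¹ • (A * vecMulVec r a)) *ᵥ b = A *ᵥ r := by
  rw [smul_mulVec, ← mulVec_mulVec, vecMulVec_mulVec, op_smul_eq_smul, mulVec_smul, smul_smul,
    inv_mul_cancel₀ hab, one_smul]

section DeepLinearNetwork

variable {ι : ℕ → Type*} [∀ k, Fintype (ι k)] {L : ℕ}
  {W : ∀ k, 𝕜 → Matrix (ι k) (ι (k - 1)) 𝕜} {q : ∀ k, 𝕜 → ι k → 𝕜}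
  {P : ∀ k, Matrix (ι L) (ι k) 𝕜}

theorem mulVec_activity_eq_mulVec_input {t : 𝕜} (hP : ∀ k < L, P k = P (k + 1) * W (k + 1) t)
    (hq : ∀ k, 1 ≤ k → k ≤ L → q k t = W k t *ᵥ q (k - 1) t) :
    ∀ k ≤ L, P k *ᵥ q k t = P 0 *ᵥ q 0 t
  | 0, _ => rfl
  | k + 1, hk => by
    rw [hq (k + 1) k.succ_pos hk, mulVec_mulVec, ← hP k hk]
    exact mulVec_activity_eq_mulVec_input hP hq k (k.le_succ.trans hk)

theorem exists_hasDerivAt_activity {D : ∀ k, Matrix (ι k) (ι (k - 1)) 𝕜} {t₀ : 𝕜}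
    (hP : ∀ k < L, P k = P (k + 1) * W (k + 1) t₀) (hq0 : HasDerivAt (q 0) 0 t₀)
    (hq : ∀ t, ∀ k, 1 ≤ k → k ≤ L → q k t = W k t *ᵥ q (k - 1) t)
    (hW : ∀ l, 1 ≤ l → l ≤ L → ∀ i j, HasDerivAt (fun t => W l t i j) (D l i j) t₀) :
    ∀ k ≤ L, ∃ u, HasDerivAt (q k) u t₀ ∧
      P k *ᵥ u = ∑ l ∈ Icc 1 k, P l *ᵥ (D l *ᵥ q (l - 1) t₀)
  | 0, _ => ⟨0, hq0, by simp⟩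
  | k + 1, hk => by
    obtain ⟨u, hu, hPu⟩ := exists_hasDerivAt_activity hP hq0 hq hW k (k.le_succ.trans hk)
    have hqk : q (k + 1) = fun t => W (k + 1) t *ᵥ q k t :=
      funext fun t => hq t (k + 1) k.succ_pos hk
    refine ⟨D (k + 1) *ᵥ q k t₀ + W (k + 1) t₀ *ᵥ u,
      hqk ▸ hasDerivAt_mulVec (hW (k + 1) k.succ_pos hk) hu, ?_⟩
    rw [sum_Icc_succ_top k.succ_pos, mulVec_add, mulVec_mulVec u, ← hP k hk, hPu, add_comm]
    rfl -- `k + 1 - 1` reduces to `k`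

end DeepLinearNetwork

theorem stmt9_general
    (L : ℕ) (n : ℕ → ℕ)
    (W : ∀ k : ℕ, ℝ → Matrix (Fin (n k)) (Fin (n (k - 1))) ℝ)
    (P : ∀ k : ℕ, ℝ → Matrix (Fin (n L)) (Fin (n k)) ℝ)
    (hPL : ∀ t : ℝ, P L t = 1)
    (hP : ∀ t : ℝ, ∀ k : ℕ, k < L → P k t = P (k + 1) t * W (k + 1) t)
    (Q : ∀ k : ℕ, ℝ → Matrix (Fin (n k)) (Fin (n 0)) ℝ)
    (hQ0 : ∀ t : ℝ, Q 0 t = 1)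
    (hQ : ∀ t : ℝ, ∀ k : ℕ, 1 ≤ k → k ≤ L → Q k t = W k t * Q (k - 1) t)
    (x : Fin (n 0) → ℝ) (y : Fin (n L) → ℝ) (t₀ : ℝ)
    (xs : ∀ k : ℕ, Fin (n k) → ℝ)
    (hS : IsUnit (∑ k ∈ Finset.Icc 1 L, P k t₀ * (P k t₀)ᵀ).det)
    (hne : ∀ l : ℕ, 1 ≤ l → l ≤ L → xs (l - 1) ⬝ᵥ (Q (l - 1) t₀ *ᵥ x) ≠ 0)
    (hW : ∀ l : ℕ, 1 ≤ l → l ≤ L → ∀ i j, HasDerivAt (fun t => W l t i j)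
      ((xs (l - 1) ⬝ᵥ (Q (l - 1) t₀ *ᵥ x))⁻¹ •
        (((P l t₀)ᵀ * ((∑ k ∈ Finset.Icc 1 L, P k t₀ * (P k t₀)ᵀ)⁻¹ *
          vecMulVec (y - P 0 t₀ *ᵥ x) (xs (l - 1)))) i j) ) t₀) :
    HasDerivAt (fun t => P 0 t *ᵥ x) (y - P 0 t₀ *ᵥ x) t₀ := by
  set S := ∑ k ∈ Icc 1 L, P k t₀ * (P k t₀)ᵀ
  set r := y - P 0 t₀ *ᵥ x
  have hQx t k (h₁ : 1 ≤ k) (h₂ : k ≤ L) : Q k t *ᵥ x = W k t *ᵥ (Q (k - 1) t *ᵥ x) := by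
    rw [hQ t k h₁ h₂, mulVec_mulVec]
  have hŷ : (fun t => P 0 t *ᵥ x) = fun t => Q L t *ᵥ x := funext fun t => by
    have := mulVec_activity_eq_mulVec_input (P := fun k => P k t) (q := fun k t => Q k t *ᵥ x)
      (hP t) (hQx t) L le_rfl
    simpa [hPL, hQ0] using this.symm
  have hx : HasDerivAt (fun t => Q 0 t *ᵥ x) 0 t₀ := by
    simpa only [hQ0, one_mulVec] using hasDerivAt_const t₀ x
  obtain ⟨u, hu, hPu⟩ := exists_hasDerivAt_activity (P := fun k => P k t₀)
    (q := fun k t => Q k t *ᵥ x)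
    (D := fun l => (xs (l - 1) ⬝ᵥ (Q (l - 1) t₀ *ᵥ x))⁻¹ •
      ((P l t₀)ᵀ * (S⁻¹ * vecMulVec r (xs (l - 1))))) (hP t₀) hx hQx hW L le_rfl
  have hur : u = r := calc
    u = P L t₀ *ᵥ u := by rw [hPL, one_mulVec]
    _ = ∑ l ∈ Icc 1 L, (P l t₀ * ((P l t₀)ᵀ * S⁻¹)) *ᵥ r := by
      rw [hPu]
      refine sum_congr rfl fun l hl => ?_
      obtain ⟨h₁, h₂⟩ := mem_Icc.1 hl
      rw [← Matrix.mul_assoc (P l t₀)ᵀ,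
        inv_dotProduct_smul_mul_vecMulVec_mulVec _ _ (hne l h₁ h₂), mulVec_mulVec]
    _ = r := by
      simp_rw [← Matrix.mul_assoc]
      rw [← sum_mulVec, ← Finset.sum_mul, mul_nonsing_inv S hS, one_mulVec]
  rw [hŷ, ← hur]
  exact hu

/-- **Theorem 1: PC with adaptive learning rate.** Suppose each weight
matrix `W_l(t)` of a deep linear network evolves as
`dW_l/dt = α_l W_{L:l+1}ᵀ S⁻¹ r x*_{l−1}ᵀ` with layer-specific learning rates
`α_l = (x*_{l−1}ᵀ x̂_{l−1})⁻¹`, where `x*_{l−1}ᵀ x̂_{l−1} ≠ 0` for every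
`l = 1, …, L`.  Then the change in the model prediction is exactly the output
residual: `dŷ/dt = r`.
Here `P l t = W_{L:l+1}(t)`, `Q l t = W_{l:1}(t)`,
`S = ∑_{k=1}^L W_{L:k+1} W_{L:k+1}ᵀ` (which is invertible), and `x*_0 = x`. -/
theorem stmt9
    (L : ℕ) (hL : 1 ≤ L) (n : ℕ → ℕ)
    (W : ∀ k : ℕ, ℝ → Matrix (Fin (n k)) (Fin (n (k - 1))) ℝ)
    (P : ∀ k : ℕ, ℝ → Matrix (Fin (n L)) (Fin (n k)) ℝ)
    (hPL : ∀ t : ℝ, P L t = 1)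
    (hP : ∀ t : ℝ, ∀ k : ℕ, k < L → P k t = P (k + 1) t * W (k + 1) t)
    (Q : ∀ k : ℕ, ℝ → Matrix (Fin (n k)) (Fin (n 0)) ℝ)
    (hQ0 : ∀ t : ℝ, Q 0 t = 1)
    (hQ : ∀ t : ℝ, ∀ k : ℕ, 1 ≤ k → k ≤ L → Q k t = W k t * Q (k - 1) t)
    (x : Fin (n 0) → ℝ) (y : Fin (n L) → ℝ) (t₀ : ℝ)
    (xs : ∀ k : ℕ, Fin (n k) → ℝ) (hxs0 : xs 0 = x)
    (hS : IsUnit (∑ k ∈ Finset.Icc 1 L, P k t₀ * (P k t₀)ᵀ).det)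
    (hne : ∀ l : ℕ, 1 ≤ l → l ≤ L → xs (l - 1) ⬝ᵥ (Q (l - 1) t₀ *ᵥ x) ≠ 0)
    (hW : ∀ l : ℕ, 1 ≤ l → l ≤ L → ∀ i j, HasDerivAt (fun t => W l t i j)
      ((xs (l - 1) ⬝ᵥ (Q (l - 1) t₀ *ᵥ x))⁻¹ •
        (((P l t₀)ᵀ * ((∑ k ∈ Finset.Icc 1 L, P k t₀ * (P k t₀)ᵀ)⁻¹ *
          vecMulVec (y - P 0 t₀ *ᵥ x) (xs (l - 1)))) i j) ) t₀) :
    HasDerivAt (fun t => P 0 t *ᵥ x) (y - P 0 t₀ *ᵥ x) t₀ :=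
  stmt9_general L n W P hPL hP Q hQ0 hQ x y t₀ xs hS hne hW
end

section
/- (Theorem 2: PC with weight update rescaling.) Suppose each weight matrix W_l(t) of a deep linear network evolves as dW_l/dt = (1/B) W_{L:l+1}ᵀ S⁻¹ R X*_{l−1}ᵀ A_l, where for each l = 1, …, L the rescaling matrix A_l ∈ ℝ^{n_{l−1} × n_{l−1}} satisfies the decorrelation condition X*_{l−1}ᵀ A_l X̂_{l−1} = I_B (the B × B identity). Then the matrix of predictions satisfies dŶ/dt = (1/B) R; equivalently, for every sample b = 1, …, B, the change in prediction dŷ_b/dt equals (1/B) r_b, the corresponding output residual scaled by 1/B. -/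
open Matrix

/-! Write `P k = W_{L:k+1}` and `Q k = W_{k:1}`, so that `Ŷ = P k Q k X` for every `k`. By the
product rule, `Q k` has a derivative `G k` with `P k G k = ∑_{l ≤ k} P l Ẇ_l Q (l-1)`. Under the
rescaled update, the decorrelation condition collapses each summand, times `X`, to
`(1/B) P l P lᵀ S⁻¹ R`, so the sum over all layers is `(1/B) S S⁻¹ R = (1/B) R`. -/

def HasMatrixDerivAt {m p : Type*} (F : ℝ → Matrix m p ℝ) (F' : Matrix m p ℝ) (t : ℝ) : Prop :=
  ∀ i j, HasDerivAt (fun s => F s i j) (F' i j) t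

namespace HasMatrixDerivAt

variable {m p q : Type*} {t : ℝ}

lemma const (C : Matrix m p ℝ) (t : ℝ) : HasMatrixDerivAt (fun _ => C) 0 t :=
  fun i j => hasDerivAt_const t (C i j)

variable [Fintype p]

lemma mul {F : ℝ → Matrix m p ℝ} {G : ℝ → Matrix p q ℝ} {F' : Matrix m p ℝ}
    {G' : Matrix p q ℝ} (hF : HasMatrixDerivAt F F' t) (hG : HasMatrixDerivAt G G' t) :
    HasMatrixDerivAt (fun s => F s * G s) (F' * G t + F t * G') t := by
  intro i j
  simp only [mul_apply, Matrix.add_apply, ← Finset.sum_add_distrib]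
  exact HasDerivAt.fun_sum (A := fun k s => F s i k * G s k j) fun k _ =>
    (hF i k).mul (hG k j)

lemma mul_const {F : ℝ → Matrix m p ℝ} {F' : Matrix m p ℝ} (hF : HasMatrixDerivAt F F' t)
    (C : Matrix p q ℝ) : HasMatrixDerivAt (fun s => F s * C) (F' * C) t := by
  simpa using hF.mul (const C t)

end HasMatrixDerivAt

/- From here on `W k` is the layer map `n k → n (k + 1)`, i.e. the paper's `W_{k+1}`; the paper's
`W_{L:k+1}` and `W_{k:1}` keep their indices as `P k` and `Q k`. -/
section LayerProducts

variable {n : ℕ → ℕ} {L : ℕ}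

lemma suffixProd_zero_eq_mul_prefixProd {ι : Type*}
    {W : ∀ k, Matrix (Fin (n (k + 1))) (Fin (n k)) ℝ}
    {P : ∀ k, Matrix ι (Fin (n k)) ℝ} {Q : ∀ k, Matrix (Fin (n k)) (Fin (n 0)) ℝ}
    (hP : ∀ k < L, P k = P (k + 1) * W k) (hQ0 : Q 0 = 1)
    (hQ : ∀ k < L, Q (k + 1) = W k * Q k) :
    ∀ k ≤ L, P 0 = P k * Q k
  | 0, _ => by rw [hQ0, Matrix.mul_one]
  | k + 1, hk => by
    rw [suffixProd_zero_eq_mul_prefixProd hP hQ0 hQ k (by omega), hP k hk, hQ k hk,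
      Matrix.mul_assoc]

lemma exists_hasMatrixDerivAt_prefixProd {ι : Type*} {t₀ : ℝ}
    {W : ∀ k, ℝ → Matrix (Fin (n (k + 1))) (Fin (n k)) ℝ}
    {D : ∀ k, Matrix (Fin (n (k + 1))) (Fin (n k)) ℝ}
    {P : ∀ k, Matrix ι (Fin (n k)) ℝ} {Q : ∀ k, ℝ → Matrix (Fin (n k)) (Fin (n 0)) ℝ}
    (hP : ∀ k < L, P k = P (k + 1) * W k t₀) (hQ0 : ∀ t, Q 0 t = 1)
    (hQ : ∀ t, ∀ k < L, Q (k + 1) t = W k t * Q k t)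
    (hW : ∀ k < L, HasMatrixDerivAt (W k) (D k) t₀) :
    ∀ k ≤ L, ∃ G, HasMatrixDerivAt (Q k) G t₀ ∧
      P k * G = ∑ l ∈ Finset.range k, P (l + 1) * D l * Q l t₀
  | 0, _ => ⟨0, by simpa [funext hQ0] using HasMatrixDerivAt.const 1 t₀, by simp⟩
  | k + 1, hk => by
    obtain ⟨G, hG, hPG⟩ := exists_hasMatrixDerivAt_prefixProd hP hQ0 hQ hW k (by omega)
    refine ⟨D k * Q k t₀ + W k t₀ * G, ?_, ?_⟩
    · rw [show Q (k + 1) = fun t => W k t * Q k t from funext fun t => hQ t k hk]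
      exact (hW k hk).mul hG
    · rw [Finset.sum_range_succ, ← hPG, hP k hk, Matrix.mul_add, add_comm,
        Matrix.mul_assoc, Matrix.mul_assoc]

theorem hasMatrixDerivAt_prediction_of_decorrelated {β : Type*} [Fintype β] [DecidableEq β] {t₀ c : ℝ}
    {W : ∀ k, ℝ → Matrix (Fin (n (k + 1))) (Fin (n k)) ℝ}
    {P : ∀ k, ℝ → Matrix (Fin (n L)) (Fin (n k)) ℝ}
    {Q : ∀ k, ℝ → Matrix (Fin (n k)) (Fin (n 0)) ℝ}
    {X : Matrix (Fin (n 0)) β ℝ} {Y : Matrix (Fin (n L)) β ℝ}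
    {Xs : ∀ k, Matrix (Fin (n k)) β ℝ} {A : ∀ k, Matrix (Fin (n k)) (Fin (n k)) ℝ}
    (hPL : ∀ t, P L t = 1) (hP : ∀ t, ∀ k < L, P k t = P (k + 1) t * W k t)
    (hQ0 : ∀ t, Q 0 t = 1) (hQ : ∀ t, ∀ k < L, Q (k + 1) t = W k t * Q k t)
    (hS : IsUnit (∑ k ∈ Finset.Icc 1 L, P k t₀ * (P k t₀)ᵀ).det)
    (hA : ∀ k < L, (Xs k)ᵀ * A k * (Q k t₀ * X) = 1)
    (hW : ∀ k < L, HasMatrixDerivAt (W k)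
      (c • ((P (k + 1) t₀)ᵀ * (∑ k ∈ Finset.Icc 1 L, P k t₀ * (P k t₀)ᵀ)⁻¹ *
        (Y - P 0 t₀ * X) * (Xs k)ᵀ * A k)) t₀) :
    HasMatrixDerivAt (fun t => P 0 t * X) (c • (Y - P 0 t₀ * X)) t₀ := by
  set S := ∑ k ∈ Finset.Icc 1 L, P k t₀ * (P k t₀)ᵀ
  set R := Y - P 0 t₀ * X
  obtain ⟨G, hG, hPG⟩ := exists_hasMatrixDerivAt_prefixProd (hP t₀) hQ0 hQ hW L le_rfl
  have hprediction : (fun t => P 0 t * X) = fun t => Q L t * X := by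
    funext t
    rw [suffixProd_zero_eq_mul_prefixProd (P := (P · t)) (Q := (Q · t)) (hP t) (hQ0 t) (hQ t) L le_rfl, hPL, Matrix.one_mul]
  have hGX : G * X = c • R :=
    calc G * X = P L t₀ * G * X := by rw [hPL, Matrix.one_mul]
      _ = ∑ l ∈ Finset.range L, c • (P (l + 1) t₀ * (P (l + 1) t₀)ᵀ * S⁻¹ * R) := by
        rw [hPG, Matrix.sum_mul]
        refine Finset.sum_congr rfl fun l hl => ?_
        have hdecor := hA l (Finset.mem_range.mp hl)
        simp only [Matrix.mul_smul, Matrix.smul_mul, Matrix.mul_assoc] at hdecor ⊢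
        rw [hdecor, Matrix.mul_one]
      _ = c • (S * S⁻¹ * R) := by
        rw [← Finset.smul_sum, ← Matrix.sum_mul, ← Matrix.sum_mul, Finset.range_eq_Ico,
          Finset.sum_Ico_add' (fun l => P l t₀ * (P l t₀)ᵀ), zero_add,
          Finset.Ico_add_one_right_eq_Icc]
      _ = c • R := by rw [mul_nonsing_inv S hS, Matrix.one_mul]
  rw [hprediction, ← hGX]
  exact hG.mul_const X

end LayerProducts

theorem stmt12_general
    (L : ℕ) (n : ℕ → ℕ) (B : ℕ)
    (W : ∀ k : ℕ, ℝ → Matrix (Fin (n k)) (Fin (n (k - 1))) ℝ)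
    (P : ∀ k : ℕ, ℝ → Matrix (Fin (n L)) (Fin (n k)) ℝ)
    (hPL : ∀ t : ℝ, P L t = 1)
    (hP : ∀ t : ℝ, ∀ k : ℕ, k < L → P k t = P (k + 1) t * W (k + 1) t)
    (Q : ∀ k : ℕ, ℝ → Matrix (Fin (n k)) (Fin (n 0)) ℝ)
    (hQ0 : ∀ t : ℝ, Q 0 t = 1)
    (hQ : ∀ t : ℝ, ∀ k : ℕ, 1 ≤ k → k ≤ L → Q k t = W k t * Q (k - 1) t)
    (X : Matrix (Fin (n 0)) (Fin B) ℝ) (Y : Matrix (Fin (n L)) (Fin B) ℝ) (t₀ : ℝ)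
    (Xs : ∀ k : ℕ, Matrix (Fin (n k)) (Fin B) ℝ)
    (A : ∀ k : ℕ, Matrix (Fin (n (k - 1))) (Fin (n (k - 1))) ℝ)
    (hS : IsUnit (∑ k ∈ Finset.Icc 1 L, P k t₀ * (P k t₀)ᵀ).det)
    (hA : ∀ l : ℕ, 1 ≤ l → l ≤ L →
      (Xs (l - 1))ᵀ * A l * (Q (l - 1) t₀ * X) = (1 : Matrix (Fin B) (Fin B) ℝ))
    (hW : ∀ l : ℕ, 1 ≤ l → l ≤ L → ∀ i j, HasDerivAt (fun t => W l t i j)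
      (((1 / (B : ℝ)) • ((P l t₀)ᵀ * (∑ k ∈ Finset.Icc 1 L, P k t₀ * (P k t₀)ᵀ)⁻¹ *
        (Y - P 0 t₀ * X) * (Xs (l - 1))ᵀ * A l)) i j) t₀) :
    ∀ i b, HasDerivAt (fun t => (P 0 t * X) i b)
      (((1 / (B : ℝ)) • (Y - P 0 t₀ * X)) i b) t₀ :=
  hasMatrixDerivAt_prediction_of_decorrelated (W := fun k => W (k + 1))
    (A := fun k => A (k + 1)) hPL hP hQ0 (fun t k hk => hQ t (k + 1) k.succ_pos hk) hS
    (fun k hk => hA (k + 1) k.succ_pos hk) (fun k hk => hW (k + 1) k.succ_pos hk)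

/-- **Theorem 2: PC with weight update rescaling.** Suppose each
weight matrix `W_l(t)` of a deep linear network evolves as
`dW_l/dt = (1/B) W_{L:l+1}ᵀ S⁻¹ R X*_{l−1}ᵀ A_l`, where for each `l = 1, …, L` the
rescaling matrix `A_l ∈ ℝ^{n_{l−1} × n_{l−1}}` satisfies the decorrelation condition
`X*_{l−1}ᵀ A_l X̂_{l−1} = I_B`.  Then `dŶ/dt = (1/B) R`; equivalently, for every
sample `b`, the change in prediction `dŷ_b/dt` equals `(1/B) r_b`.
Here `P l t = W_{L:l+1}(t)`, `Q l t = W_{l:1}(t)`, `R = Y − W_{L:1} X`,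
`X̂_{l−1} = W_{l−1:1} X`, and `S = ∑_{k=1}^L W_{L:k+1} W_{L:k+1}ᵀ` (invertible);
derivatives of matrix-valued functions are stated entrywise, so the conclusion
states exactly that each sample's prediction changes by `(1/B)` times its output
residual. -/
theorem stmt12
    (L : ℕ) (hL : 1 ≤ L) (n : ℕ → ℕ) (B : ℕ) (hB : 0 < B)
    (W : ∀ k : ℕ, ℝ → Matrix (Fin (n k)) (Fin (n (k - 1))) ℝ)
    (P : ∀ k : ℕ, ℝ → Matrix (Fin (n L)) (Fin (n k)) ℝ)
    (hPL : ∀ t : ℝ, P L t = 1)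
    (hP : ∀ t : ℝ, ∀ k : ℕ, k < L → P k t = P (k + 1) t * W (k + 1) t)
    (Q : ∀ k : ℕ, ℝ → Matrix (Fin (n k)) (Fin (n 0)) ℝ)
    (hQ0 : ∀ t : ℝ, Q 0 t = 1)
    (hQ : ∀ t : ℝ, ∀ k : ℕ, 1 ≤ k → k ≤ L → Q k t = W k t * Q (k - 1) t)
    (X : Matrix (Fin (n 0)) (Fin B) ℝ) (Y : Matrix (Fin (n L)) (Fin B) ℝ) (t₀ : ℝ)
    (Xs : ∀ k : ℕ, Matrix (Fin (n k)) (Fin B) ℝ)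
    (A : ∀ k : ℕ, Matrix (Fin (n (k - 1))) (Fin (n (k - 1))) ℝ)
    (hS : IsUnit (∑ k ∈ Finset.Icc 1 L, P k t₀ * (P k t₀)ᵀ).det)
    (hA : ∀ l : ℕ, 1 ≤ l → l ≤ L →
      (Xs (l - 1))ᵀ * A l * (Q (l - 1) t₀ * X) = (1 : Matrix (Fin B) (Fin B) ℝ))
    (hW : ∀ l : ℕ, 1 ≤ l → l ≤ L → ∀ i j, HasDerivAt (fun t => W l t i j)
      (((1 / (B : ℝ)) • ((P l t₀)ᵀ * (∑ k ∈ Finset.Icc 1 L, P k t₀ * (P k t₀)ᵀ)⁻¹ *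
        (Y - P 0 t₀ * X) * (Xs (l - 1))ᵀ * A l)) i j) t₀) :
    ∀ i b, HasDerivAt (fun t => (P 0 t * X) i b)
      (((1 / (B : ℝ)) • (Y - P 0 t₀ * X)) i b) t₀ :=
  stmt12_general L n B W P hPL hP Q hQ0 hQ X Y t₀ Xs A hS hA hW
end

section
/- If each weight matrix W_l(t) of a linear residual network evolves under the backpropagation gradient flow dW_l/dt = W̃_{L−1:l+1}ᵀ r x̂_{l−1}ᵀ (all quantities evaluated from the weights at time t), then the prediction ŷ(t) = W̃_{L−1:1}(t) x satisfies dŷ/dt = ∑_{l=1}^{L−1} W̃_{L−1:l+1} W̃_{L−1:l+1}ᵀ r (x̂_{l−1}ᵀ x̂_{l−1}). -/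
/-!
Both sides concern the ordered product `(1 + W_{L-1}) ⋯ (1 + W_1)`: for every `l` it factors as
`P l * Q l`, so in particular `ŷ = Q (L - 1) x`. The product rule in the normed algebra of matrices
gives `d/dt (1 + W_{L-1}) ⋯ (1 + W_1) = ∑ₗ P l * Ẇ l * Q (l - 1)`, and substituting
`Ẇ l = (P l)ᵀ r x̂_{l-1}ᵀ` and applying to `x` turns the `l`-th term into
`(x̂_{l-1} ⬝ x̂_{l-1}) • P l (P l)ᵀ r`.
-/

open Matrix

section OrderedProduct

variable {𝔸 : Type*}

theorem eq_mul_of_suffix_prefix_recursions [Monoid 𝔸] (M : ℕ) (A P Q : ℕ → 𝔸)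
    (hP : ∀ l < M, P l = P (l + 1) * A (l + 1)) (hQ0 : Q 0 = 1)
    (hQ : ∀ l, 1 ≤ l → l ≤ M → Q l = A l * Q (l - 1)) :
    ∀ l ≤ M, P 0 = P l * Q l := by
  intro l hl
  induction l with
  | zero => rw [hQ0, mul_one]
  | succ l ih =>
    rw [ih (by omega), hQ (l + 1) (by omega) hl, Nat.add_sub_cancel, ← mul_assoc, ← hP l hl]

variable {𝕜 : Type*} [NontriviallyNormedField 𝕜] [NormedRing 𝔸] [NormedAlgebra 𝕜 𝔸]

-- `P l` need not be invertible, so only `P l * Q'` has a closed form.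
theorem exists_hasDerivAt_prefix_prod (M : ℕ) (A : ℕ → 𝕜 → 𝔸) (A' : ℕ → 𝔸) (P : ℕ → 𝔸)
    (Q : ℕ → 𝕜 → 𝔸) (t₀ : 𝕜) (hP : ∀ l < M, P l = P (l + 1) * A (l + 1) t₀)
    (hQ0 : ∀ t, Q 0 t = 1) (hQ : ∀ t, ∀ l, 1 ≤ l → l ≤ M → Q l t = A l t * Q (l - 1) t)
    (hA : ∀ k, 1 ≤ k → k ≤ M → HasDerivAt (A k) (A' k) t₀) :
    ∀ l ≤ M, ∃ Q', HasDerivAt (Q l) Q' t₀ ∧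
      P l * Q' = ∑ k ∈ Finset.Icc 1 l, P k * A' k * Q (k - 1) t₀ := by
  intro l hl
  induction l with
  | zero =>
    refine ⟨0, ?_, by simp⟩
    simpa [funext hQ0] using hasDerivAt_const t₀ (1 : 𝔸)
  | succ l ih =>
    obtain ⟨Q', hQ', hsum⟩ := ih (by omega)
    have hrec : Q (l + 1) = fun t => A (l + 1) t * Q l t :=
      funext fun t => hQ t (l + 1) (by omega) hl
    refine ⟨A' (l + 1) * Q l t₀ + A (l + 1) t₀ * Q', ?_, ?_⟩
    · rw [hrec]
      exact (hA (l + 1) (by omega) hl).mul hQ'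
    · rw [Finset.sum_Icc_succ_top (by omega), ← hsum, hP l hl, Nat.add_sub_cancel]
      noncomm_ring

theorem hasDerivAt_prod_of_suffix_prefix_recursions (M : ℕ) (A : ℕ → 𝕜 → 𝔸) (A' : ℕ → 𝔸)
    (P Q : ℕ → 𝕜 → 𝔸) (t₀ : 𝕜) (hPtop : ∀ t, P M t = 1)
    (hP : ∀ t, ∀ l < M, P l t = P (l + 1) t * A (l + 1) t)
    (hQ0 : ∀ t, Q 0 t = 1) (hQ : ∀ t, ∀ l, 1 ≤ l → l ≤ M → Q l t = A l t * Q (l - 1) t)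
    (hA : ∀ k, 1 ≤ k → k ≤ M → HasDerivAt (A k) (A' k) t₀) :
    HasDerivAt (P 0) (∑ k ∈ Finset.Icc 1 M, P k t₀ * A' k * Q (k - 1) t₀) t₀ := by
  obtain ⟨Q', hQ', hsum⟩ :=
    exists_hasDerivAt_prefix_prod M A A' (P · t₀) Q t₀ (hP t₀) hQ0 hQ hA M le_rfl
  have hP0 : P 0 = Q M := funext fun t => by
    rw [eq_mul_of_suffix_prefix_recursions M (A · t) (P · t) (Q · t) (hP t) (hQ0 t) (hQ t) M
      le_rfl, hPtop, one_mul]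
  rwa [hP0, ← hsum, hPtop, one_mul]

end OrderedProduct

section MatrixDerivatives

-- In finite dimension any norm would do; the `L∞` operator norm makes matrices a normed algebra.
open scoped Matrix.Norms.Operator

variable {𝕜 m n : Type*} [NontriviallyNormedField 𝕜] [Fintype m] [Fintype n]

theorem Matrix.hasDerivAt_of_hasDerivAt_entries [DecidableEq m] [DecidableEq n]
    {f : 𝕜 → Matrix m n 𝕜} {f' : Matrix m n 𝕜} {t : 𝕜}
    (h : ∀ i j, HasDerivAt (fun s => f s i j) (f' i j) t) : HasDerivAt f f' t := by
  have hsingle (g : Matrix m n 𝕜) : g = ∑ i, ∑ j, g i j • single i j (1 : 𝕜) := by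
    simpa [smul_single] using matrix_eq_sum_single g
  rw [show f = fun s => ∑ i, ∑ j, f s i j • single i j (1 : 𝕜) from funext fun s => hsingle _,
    hsingle f']
  exact HasDerivAt.fun_sum fun i _ => HasDerivAt.fun_sum fun j _ => (h i j).smul_const _

theorem HasDerivAt.mulVec_const {f : 𝕜 → Matrix m n 𝕜} {f' : Matrix m n 𝕜} {t : 𝕜}
    (h : HasDerivAt f f' t) (x : n → 𝕜) : HasDerivAt (fun s => f s *ᵥ x) (f' *ᵥ x) t := by
  let e : Matrix m n 𝕜 →L[𝕜] m → 𝕜 :=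
    LinearMap.mkContinuous
      { toFun := (· *ᵥ x), map_add' := (add_mulVec · · x), map_smul' := (smul_mulVec · · x) } ‖x‖
      fun A => (linfty_opNorm_mulVec A x).trans_eq (mul_comm _ _)
  exact e.hasFDerivAt.comp_hasDerivAt t h

end MatrixDerivatives

theorem mul_vecMulVec_mul_mulVec_s15 {R k n p q : Type*} [CommSemiring R] [Fintype n] [Fintype p]
    [Fintype q] (B : Matrix k n R) (a : n → R) (b : p → R) (C : Matrix p q R) (x : q → R) :
    (B * vecMulVec a b * C) *ᵥ x = (b ⬝ᵥ (C *ᵥ x)) • (B *ᵥ a) := by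
  rw [← mulVec_mulVec, ← mulVec_mulVec, vecMulVec_mulVec]
  simp [mulVec_smul]

theorem stmt15_general
    (L N : ℕ)
    (W : ℕ → ℝ → Matrix (Fin N) (Fin N) ℝ)
    (P Q : ℕ → ℝ → Matrix (Fin N) (Fin N) ℝ)
    (hPtop : ∀ t : ℝ, P (L - 1) t = 1)
    (hP : ∀ t : ℝ, ∀ l : ℕ, l < L - 1 → P l t = P (l + 1) t * (1 + W (l + 1) t))
    (hQ0 : ∀ t : ℝ, Q 0 t = 1)
    (hQ : ∀ t : ℝ, ∀ l : ℕ, 1 ≤ l → l ≤ L - 1 → Q l t = (1 + W l t) * Q (l - 1) t)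
    (x y : Fin N → ℝ) (t₀ : ℝ)
    (hW : ∀ l : ℕ, 1 ≤ l → l ≤ L - 1 → ∀ i j, HasDerivAt (fun t => W l t i j)
      (((P l t₀)ᵀ * vecMulVec (y - P 0 t₀ *ᵥ x) (Q (l - 1) t₀ *ᵥ x)) i j) t₀) :
    HasDerivAt (fun t => P 0 t *ᵥ x)
      (∑ l ∈ Finset.Icc 1 (L - 1), ((Q (l - 1) t₀ *ᵥ x) ⬝ᵥ (Q (l - 1) t₀ *ᵥ x)) •
        ((P l t₀ * (P l t₀)ᵀ) *ᵥ (y - P 0 t₀ *ᵥ x))) t₀ := by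
  open scoped Matrix.Norms.Operator in
  have hprod := hasDerivAt_prod_of_suffix_prefix_recursions (L - 1) (fun l t => 1 + W l t)
    (fun l => (P l t₀)ᵀ * vecMulVec (y - P 0 t₀ *ᵥ x) (Q (l - 1) t₀ *ᵥ x)) P Q t₀ hPtop hP hQ0 hQ
    fun l hl₁ hl₂ => (Matrix.hasDerivAt_of_hasDerivAt_entries (hW l hl₁ hl₂)).const_add 1
  convert hprod.mulVec_const x using 1
  rw [sum_mulVec]
  refine Finset.sum_congr rfl fun l _ => ?_
  rw [← mul_assoc, mul_vecMulVec_mul_mulVec_s15]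

/-- If each weight matrix `W_l(t)` of a linear residual network
evolves under the backpropagation gradient flow
`dW_l/dt = W̃_{L−1:l+1}ᵀ r x̂_{l−1}ᵀ`, then the prediction `ŷ(t) = W̃_{L−1:1}(t) x`
satisfies `dŷ/dt = ∑_{l=1}^{L−1} W̃_{L−1:l+1} W̃_{L−1:l+1}ᵀ r (x̂_{l−1}ᵀ x̂_{l−1})`.
Here `P l t = W̃_{L−1:l+1}(t)` and `Q l t = W̃_{l:1}(t)` are the partial products of
the residual factors `I + W_k`, `x̂_l = W̃_{l:1} x` and `r = y − ŷ`. -/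
theorem stmt15
    (L N : ℕ) (hL : 2 ≤ L)
    (W : ℕ → ℝ → Matrix (Fin N) (Fin N) ℝ)
    (P Q : ℕ → ℝ → Matrix (Fin N) (Fin N) ℝ)
    (hPtop : ∀ t : ℝ, P (L - 1) t = 1)
    (hP : ∀ t : ℝ, ∀ l : ℕ, l < L - 1 → P l t = P (l + 1) t * (1 + W (l + 1) t))
    (hQ0 : ∀ t : ℝ, Q 0 t = 1)
    (hQ : ∀ t : ℝ, ∀ l : ℕ, 1 ≤ l → l ≤ L - 1 → Q l t = (1 + W l t) * Q (l - 1) t)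
    (x y : Fin N → ℝ) (t₀ : ℝ)
    (hW : ∀ l : ℕ, 1 ≤ l → l ≤ L - 1 → ∀ i j, HasDerivAt (fun t => W l t i j)
      (((P l t₀)ᵀ * vecMulVec (y - P 0 t₀ *ᵥ x) (Q (l - 1) t₀ *ᵥ x)) i j) t₀) :
    HasDerivAt (fun t => P 0 t *ᵥ x)
      (∑ l ∈ Finset.Icc 1 (L - 1), ((Q (l - 1) t₀ *ᵥ x) ⬝ᵥ (Q (l - 1) t₀ *ᵥ x)) •
        ((P l t₀ * (P l t₀)ᵀ) *ᵥ (y - P 0 t₀ *ᵥ x))) t₀ :=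
  stmt15_general L N W P Q hPtop hP hQ0 hQ x y t₀ hW
end

section
/- Let the activities x_1 = x, …, x_L = y of a linear residual network satisfy the equilibrium relations ε_l = W̃_{L−1:l+1}ᵀ ε_{L−1} for all l = 1, …, L−1, where ε_l = x_{l+1} − (I + W_l) x_l. Then: (i) the matrix S̃ = ∑_{l=1}^{L−1} W̃_{L−1:l+1} W̃_{L−1:l+1}ᵀ is symmetric positive definite, hence invertible; (ii) the residual satisfies r = y − W̃_{L−1:1} x = S̃ ε_{L−1}, so ε_{L−1} = S̃⁻¹ r; and (iii) the ResNet PC energy at these activities equals E = ∑_{l=1}^{L−1} (1/2)‖ε_l‖² = (1/2) rᵀ S̃⁻¹ r. -/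
open Matrix

/-!
Writing `ε = ε_{L−1}` and `P l = W̃_{L−1:l+1}`, the equilibrium relation gives
`P l P lᵀ ε = P l ε_l = P l x_{l+1} − P (l−1) x_l`, since `P (l−1) = P l (I + W_l)`.
Summing over `l` telescopes to `S̃ ε = P (L−1) x_L − P 0 x_1 = y − W̃_{L−1:1} x = r`.
`S̃` is a sum of Gram matrices `P l P lᵀ`, one of which is `P (L−1) P (L−1)ᵀ = I`,
so it is positive definite. Finally `∑ ‖ε_l‖² = ∑ ‖P lᵀ ε‖² = εᵀ S̃ ε = rᵀ S̃⁻¹ r`.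
-/

theorem Matrix.PosDef.sum_of_mem {ι m R : Type*} [Fintype m] [CommRing R] [PartialOrder R]
    [StarRing R] [AddLeftMono R] {A : ι → Matrix m m R} {s : Finset ι}
    (hA : ∀ i ∈ s, (A i).PosSemidef) {j : ι} (hj : j ∈ s) (hAj : (A j).PosDef) :
    (∑ i ∈ s, A i).PosDef := by
  classical
  rw [← Finset.add_sum_erase s A hj]
  exact hAj.add_posSemidef (posSemidef_sum _ fun i hi => hA i (Finset.mem_of_mem_erase hi))

theorem posDef_sum_mul_transpose_of_isUnit {ι n : Type*} [Fintype n] [DecidableEq n]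
    {A : ι → Matrix n n ℝ} {s : Finset ι} {j : ι} (hj : j ∈ s) (hAj : IsUnit (A j)) :
    (∑ i ∈ s, A i * (A i)ᵀ).PosDef := by
  simp only [← conjTranspose_eq_transpose_of_trivial]
  refine PosDef.sum_of_mem (fun i _ => posSemidef_self_mul_conjTranspose (A i)) hj ?_
  simpa [star_eq_conjTranspose] using
    (IsUnit.posDef_star_right_conjugate_iff (x := 1) hAj).2 PosDef.one

theorem dotProduct_sum_mul_transpose_mulVec {ι n k R : Type*} [Fintype n] [Fintype k]
    [CommSemiring R] (A : ι → Matrix n k R) (s : Finset ι) (e : n → R) :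
    e ⬝ᵥ ((∑ i ∈ s, A i * (A i)ᵀ) *ᵥ e) = ∑ i ∈ s, ((A i)ᵀ *ᵥ e) ⬝ᵥ ((A i)ᵀ *ᵥ e) := by
  rw [sum_mulVec, dotProduct_sum]
  refine Finset.sum_congr rfl fun i _ => ?_
  rw [← mulVec_mulVec, dotProduct_mulVec, ← mulVec_transpose]

theorem sum_mul_transpose_mulVec_eq_sub {n R : Type*} [Fintype n] [DecidableEq n] [CommRing R]
    (W P : ℕ → Matrix n n R) (a : ℕ → n → R) (e : n → R) (m : ℕ)
    (hP : ∀ l < m, P l = P (l + 1) * (1 + W (l + 1)))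
    (heq : ∀ l, 1 ≤ l → l ≤ m → a (l + 1) - (1 + W l) *ᵥ a l = (P l)ᵀ *ᵥ e) :
    (∑ l ∈ Finset.Icc 1 m, P l * (P l)ᵀ) *ᵥ e = P m *ᵥ a (m + 1) - P 0 *ᵥ a 1 := by
  induction m with
  | zero => simp
  | succ m ih =>
    rw [Finset.sum_Icc_succ_top (by omega), add_mulVec,
      ih (fun l hl => hP l (by omega)) (fun l h1 h2 => heq l h1 (by omega)),
      ← mulVec_mulVec, ← heq (m + 1) (by omega) le_rfl, mulVec_sub, mulVec_mulVec,
      ← hP m (by omega)]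
    abel

/-- Let the activities `x_1 = x, …, x_L = y` of a linear residual
network satisfy the equilibrium relations `ε_l = W̃_{L−1:l+1}ᵀ ε_{L−1}` for all
`l = 1, …, L−1`, where `ε_l = x_{l+1} − (I + W_l) x_l`.  Then:
(i) `S̃ = ∑_{l=1}^{L−1} W̃_{L−1:l+1} W̃_{L−1:l+1}ᵀ` is symmetric positive definite,
hence invertible; (ii) the residual satisfies `r = y − W̃_{L−1:1} x = S̃ ε_{L−1}`,
so `ε_{L−1} = S̃⁻¹ r`; (iii) the ResNet PC energy at these activities equals
`E = ∑_{l=1}^{L−1} (1/2)‖ε_l‖² = (1/2) rᵀ S̃⁻¹ r`.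
Here `a` is the family of activities and `P l = W̃_{L−1:l+1}`. -/
theorem stmt17
    (L N : ℕ) (hL : 2 ≤ L)
    (W : ℕ → Matrix (Fin N) (Fin N) ℝ)
    (P : ℕ → Matrix (Fin N) (Fin N) ℝ)
    (hPtop : P (L - 1) = 1)
    (hP : ∀ l : ℕ, l < L - 1 → P l = P (l + 1) * (1 + W (l + 1)))
    (x y : Fin N → ℝ)
    (a : ℕ → Fin N → ℝ) (ha1 : a 1 = x) (haL : a L = y)
    (heq : ∀ l : ℕ, 1 ≤ l → l ≤ L - 1 →
      a (l + 1) - (1 + W l) *ᵥ a l =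
        (P l)ᵀ *ᵥ (a L - (1 + W (L - 1)) *ᵥ a (L - 1))) :
    -- (i) `S̃` is symmetric positive definite, hence invertible
    ((∑ l ∈ Finset.Icc 1 (L - 1), P l * (P l)ᵀ)ᵀ =
        ∑ l ∈ Finset.Icc 1 (L - 1), P l * (P l)ᵀ ∧
      (∑ l ∈ Finset.Icc 1 (L - 1), P l * (P l)ᵀ).PosDef ∧
      IsUnit (∑ l ∈ Finset.Icc 1 (L - 1), P l * (P l)ᵀ)) ∧
    -- (ii) `r = S̃ ε_{L−1}` and `ε_{L−1} = S̃⁻¹ r`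
    (y - P 0 *ᵥ x =
        (∑ l ∈ Finset.Icc 1 (L - 1), P l * (P l)ᵀ) *ᵥ
          (a L - (1 + W (L - 1)) *ᵥ a (L - 1)) ∧
      a L - (1 + W (L - 1)) *ᵥ a (L - 1) =
        (∑ l ∈ Finset.Icc 1 (L - 1), P l * (P l)ᵀ)⁻¹ *ᵥ (y - P 0 *ᵥ x)) ∧
    -- (iii) the PC energy equals `(1/2) rᵀ S̃⁻¹ r`
    (∑ l ∈ Finset.Icc 1 (L - 1), (1 / 2 : ℝ) *
        ((a (l + 1) - (1 + W l) *ᵥ a l) ⬝ᵥ (a (l + 1) - (1 + W l) *ᵥ a l)) =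
      (1 / 2 : ℝ) * ((y - P 0 *ᵥ x) ⬝ᵥ
        ((∑ l ∈ Finset.Icc 1 (L - 1), P l * (P l)ᵀ)⁻¹ *ᵥ (y - P 0 *ᵥ x)))) := by
  set S := ∑ l ∈ Finset.Icc 1 (L - 1), P l * (P l)ᵀ
  set ε := a L - (1 + W (L - 1)) *ᵥ a (L - 1)
  have hS : S.PosDef :=
    posDef_sum_mul_transpose_of_isUnit (Finset.mem_Icc.2 ⟨by omega, le_rfl⟩) (hPtop ▸ isUnit_one)
  have hr : y - P 0 *ᵥ x = S *ᵥ ε := by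
    rw [sum_mul_transpose_mulVec_eq_sub W P a ε (L - 1) hP heq, hPtop, one_mulVec,
      Nat.sub_add_cancel (by omega), haL, ha1]
  have hε : ε = S⁻¹ *ᵥ (y - P 0 *ᵥ x) := by
    rw [hr, mulVec_mulVec, nonsing_inv_mul S ((isUnit_iff_isUnit_det S).1 hS.isUnit), one_mulVec]
  refine ⟨⟨(conjTranspose_eq_transpose_of_trivial S).symm.trans hS.isHermitian, hS, hS.isUnit⟩,
    ⟨hr, hε⟩, ?_⟩
  rw [← hε, hr, dotProduct_comm, dotProduct_sum_mul_transpose_mulVec, Finset.mul_sum]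
  exact Finset.sum_congr rfl fun l hl => by
    rw [heq l (Finset.mem_Icc.1 hl).1 (Finset.mem_Icc.1 hl).2]
end
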